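/- arXiv:1111.2893 — 12 statements merged into one kernel-verified Lean document; each statement's English description precedes it below -/
import Mathlib

section
/- For every integer n ≥ 2 and every nonnegative, nondecreasing integrable function g : [0,1] → ℝ, the integral ∫_0^1 g(t)·t^{n-1}·(2·t^{n-1} − 1) dt is nonnegative. -/
/-!
The weight `w t = t^(n-1) (2 t^(n-1) - 1)` changes sign exactly once on `[0,1]`, from `≤ 0` to `≥ 0`,
at `c = (1/2)^(1/(n-1))`, and `∫₀¹ w = 2/(2n-1) - 1/n ≥ 0`. Since `g` is nondecreasing,
`(g t - g c) w t ≥ 0` everywhere, so `∫ g w ≥ g c ∫ w ≥ 0`.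
-/

open MeasureTheory intervalIntegral Set

lemma mul_le_mul_of_sign_change {g w : ℝ → ℝ} {a b c t : ℝ} (hg : MonotoneOn g (Icc a b))
    (hc : c ∈ Icc a b) (hw_neg : ∀ s ∈ Icc a c, w s ≤ 0) (hw_pos : ∀ s ∈ Icc c b, 0 ≤ w s)
    (ht : t ∈ Icc a b) :
    g c * w t ≤ g t * w t := by
  rcases le_total t c with htc | hct
  · exact mul_le_mul_of_nonpos_right (hg ht hc htc) (hw_neg t ⟨ht.1, htc⟩)
  · exact mul_le_mul_of_nonneg_right (hg hc ht hct) (hw_pos t ⟨hct, ht.2⟩)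

theorem integral_mul_nonneg_of_monotoneOn_of_sign_change {g w : ℝ → ℝ} {a b c : ℝ}
    (hg : MonotoneOn g (Icc a b)) (hc : c ∈ Icc a b) (hgc : 0 ≤ g c)
    (hw : ContinuousOn w (Icc a b)) (hw_neg : ∀ t ∈ Icc a c, w t ≤ 0)
    (hw_pos : ∀ t ∈ Icc c b, 0 ≤ w t) (hw_int : 0 ≤ ∫ t in a..b, w t) :
    0 ≤ ∫ t in a..b, g t * w t := by
  have hab : a ≤ b := hc.1.trans hc.2
  have hg_ii : IntervalIntegrable g volume a b := (uIcc_of_le hab ▸ hg).intervalIntegrable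
  have hw_ii : IntervalIntegrable w volume a b := (uIcc_of_le hab ▸ hw).intervalIntegrable
  calc 0 ≤ g c * ∫ t in a..b, w t := mul_nonneg hgc hw_int
    _ = ∫ t in a..b, g c * w t := (intervalIntegral.integral_const_mul _ _).symm
    _ ≤ ∫ t in a..b, g t * w t :=
      integral_mono_on hab (hw_ii.const_mul _) (hg_ii.mul_continuousOn (uIcc_of_le hab ▸ hw))
        fun t ht => mul_le_mul_of_sign_change hg hc hw_neg hw_pos ht

lemma integral_pow_mul_two_mul_pow_sub_one (m : ℕ) :
    ∫ t in (0:ℝ)..1, t ^ m * (2 * t ^ m - 1) = 2 / (2 * m + 1) - 1 / (m + 1) := by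
  have hw : ∀ t : ℝ, t ^ m * (2 * t ^ m - 1) = 2 * t ^ (2 * m) - t ^ m := fun t => by ring
  simp_rw [hw]
  rw [integral_sub ((by fun_prop : Continuous fun t : ℝ => 2 * t ^ (2 * m)).intervalIntegrable _ _)
    ((continuous_pow m).intervalIntegrable _ _), intervalIntegral.integral_const_mul,
    integral_pow, integral_pow]
  push_cast
  ring

lemma integral_pow_mul_two_mul_pow_sub_one_nonneg (m : ℕ) :
    0 ≤ ∫ t in (0:ℝ)..1, t ^ m * (2 * t ^ m - 1) := by
  rw [integral_pow_mul_two_mul_pow_sub_one, sub_nonneg,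
    div_le_div_iff₀ (by positivity) (by positivity)]
  linarith [(m.cast_nonneg : (0:ℝ) ≤ m)]

theorem integral_monotone_weight_nonneg_general
    (n : ℕ) (hn : 2 ≤ n) (g : ℝ → ℝ)
    (hg_nonneg : ∀ t ∈ Set.Icc (0 : ℝ) 1, 0 ≤ g t)
    (hg_mono : MonotoneOn g (Set.Icc (0 : ℝ) 1)) :
    0 ≤ ∫ t in (0:ℝ)..1, g t * (t ^ (n - 1) * (2 * t ^ (n - 1) - 1)) := by
  set m := n - 1
  set c : ℝ := (1 / 2) ^ ((m : ℝ)⁻¹)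
  have hc : c ∈ Icc (0:ℝ) 1 :=
    ⟨Real.rpow_nonneg (by norm_num) _, Real.rpow_le_one (by norm_num) (by norm_num) (by positivity)⟩
  have hcm : c ^ m = 1 / 2 := Real.rpow_inv_natCast_pow (by norm_num) (by omega)
  refine integral_mul_nonneg_of_monotoneOn_of_sign_change hg_mono hc (hg_nonneg c hc)
    (by fun_prop) (fun t ht => ?_) (fun t ht => ?_) (integral_pow_mul_two_mul_pow_sub_one_nonneg m)
  · have : t ^ m ≤ 1 / 2 := hcm ▸ pow_le_pow_left₀ ht.1 ht.2 m
    exact mul_nonpos_of_nonneg_of_nonpos (pow_nonneg ht.1 m) (by linarith)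
  · have : 1 / 2 ≤ t ^ m := hcm ▸ pow_le_pow_left₀ hc.1 ht.1 m
    exact mul_nonneg (pow_nonneg (hc.1.trans ht.1) m) (by linarith)

/-- For every integer `n ≥ 2` and every nonnegative, nondecreasing integrable
function `g : [0,1] → ℝ`, the integral `∫ t in 0..1, g t * t^(n-1) * (2 * t^(n-1) - 1)`
is nonnegative. -/
theorem integral_monotone_weight_nonneg
    (n : ℕ) (hn : 2 ≤ n) (g : ℝ → ℝ)
    (hg_nonneg : ∀ t ∈ Set.Icc (0 : ℝ) 1, 0 ≤ g t)
    (hg_mono : MonotoneOn g (Set.Icc (0 : ℝ) 1))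
    (hg_int : IntervalIntegrable g MeasureTheory.volume 0 1) :
    0 ≤ ∫ t in (0:ℝ)..1, g t * (t ^ (n - 1) * (2 * t ^ (n - 1) - 1)) :=
  integral_monotone_weight_nonneg_general n hn g hg_nonneg hg_mono
end

section
/- Let X_1, …, X_{n−1} be i.i.d. real random variables with continuous cdf F satisfying F(a) = 0, and let Y = max_j X_j. Then for all r, v with a ≤ r ≤ v, E[max(Y, r)·1{Y ≤ v}] = v·F(v)^{n−1} − ∫_r^v F(z)^{n−1} dz. (Consequently, in a highest-bid-wins all-pay auction with value reserve r, an agent with value v ≥ r bids her expected payment in the corresponding second-price auction, namely v·F(v)^{n−1} − ∫_r^v F(z)^{n−1} dz.) -/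
/-! For `Y ≤ v` one has `v - max Y r = ∫ z in r..v, 1{Y ≤ z}`, and this vanishes when `Y > v`.
Integrating over `ω` and swapping the integrals (Fubini) gives
`v · P(Y ≤ v) - E[max Y r · 1{Y ≤ v}] = ∫ z in r..v, P(Y ≤ z)`
for any real random variable `Y`.
For the maximum of independent variables with cdf `F`, `P(Y ≤ z) = F z ^ (n - 1)`. -/

open MeasureTheory ProbabilityTheory intervalIntegral Set

theorem intervalIntegral_indicator_Ici_one {r v : ℝ} (y : ℝ) (hrv : r ≤ v) :
    ∫ z in r..v, (Ici y).indicator (1 : ℝ → ℝ) z = max (v - max r y) 0 := by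
  rw [integral_of_le hrv, integral_indicator_one measurableSet_Ici,
    measureReal_restrict_apply measurableSet_Ici,
    measureReal_congr ((Ioi_ae_eq_Ici (μ := volume)).symm.inter (ae_eq_refl (Ioc r v))),
    inter_comm, Ioc_inter_Ioi, Real.volume_real_Ioc]

section
variable {Ω : Type*} [MeasurableSpace Ω] {μ : Measure Ω} [IsFiniteMeasure μ] {Y : Ω → ℝ}

theorem integral_max_sub_max_zero_eq_intervalIntegral_measureReal_le (hY : Measurable Y) {r v : ℝ}
    (hrv : r ≤ v) :
    ∫ ω, max (v - max r (Y ω)) 0 ∂μ = ∫ z in r..v, μ.real {ω | Y ω ≤ z} := by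
  have hint : Integrable (Function.uncurry fun ω z => (Ici (Y ω)).indicator (1 : ℝ → ℝ) z)
      (μ.prod (volume.restrict (Ioc r v))) :=
    (integrable_indicator_iff (measurableSet_le (hY.comp measurable_fst) measurable_snd)).2
      (integrable_const (1 : ℝ)).integrableOn
  simp_rw [← intervalIntegral_indicator_Ici_one _ hrv, integral_of_le hrv]
  rw [integral_integral_swap hint]
  congr with z
  exact integral_indicator_one (measurableSet_le hY measurable_const)

theorem setIntegral_max_eq_sub_intervalIntegral_measureReal_le (hY : Measurable Y) {r v : ℝ}
    (hrv : r ≤ v) :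
    ∫ ω in {ω | Y ω ≤ v}, max (Y ω) r ∂μ =
      v * μ.real {ω | Y ω ≤ v} - ∫ z in r..v, μ.real {ω | Y ω ≤ z} := by
  have hA : MeasurableSet {ω | Y ω ≤ v} := measurableSet_le hY measurable_const
  have hint : IntegrableOn (fun ω => max (Y ω) r) {ω | Y ω ≤ v} μ := by
    refine Measure.integrableOn_of_bounded (measure_ne_top _ _)
      (hY.max measurable_const).aestronglyMeasurable (M := max |r| |v|) ?_
    filter_upwards [ae_restrict_mem hA] with ω hω
    exact abs_le_max_abs_abs (le_max_right _ _) (max_le hω hrv)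
  have hintegrand : (fun ω => max (v - max r (Y ω)) 0) =
      {ω | Y ω ≤ v}.indicator (fun ω => v - max (Y ω) r) := by
    ext ω
    by_cases h : Y ω ≤ v
    · simp [h, max_comm, hrv]
    · simp [h, (lt_of_not_ge h).le.trans (le_max_right r _)]
  rw [← integral_max_sub_max_zero_eq_intervalIntegral_measureReal_le hY hrv, hintegrand,
    MeasureTheory.integral_indicator hA, integral_sub (integrable_const v) hint,
    setIntegral_const, smul_eq_mul]
  ring

end

theorem measure_sup'_le_eq_prod {Ω ι β : Type*} [MeasurableSpace Ω] {μ : Measure Ω}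
    [LinearOrder β] [TopologicalSpace β] [OrderClosedTopology β] [MeasurableSpace β]
    [OpensMeasurableSpace β] {X : ι → Ω → β} (hX : iIndepFun X μ) {s : Finset ι}
    (hs : s.Nonempty) (t : β) :
    μ {ω | s.sup' hs (fun i => X i ω) ≤ t} = ∏ i ∈ s, μ {ω | X i ω ≤ t} := by
  have hset : {ω | s.sup' hs (fun i => X i ω) ≤ t} = ⋂ i ∈ s, X i ⁻¹' Iic t := by
    ext ω
    simp [Finset.sup'_le_iff]
  rw [hset]
  exact hX.measure_inter_preimage_eq_mul s fun _ _ => measurableSet_Iic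

theorem all_pay_bid_eq
    (n : ℕ) (hn : 2 ≤ n)
    {Ω : Type*} [MeasurableSpace Ω] (μ : Measure Ω) [IsProbabilityMeasure μ]
    (X : Fin (n - 1) → Ω → ℝ)
    (hXmeas : ∀ i, Measurable (X i))
    (hXindep : iIndepFun X μ)
    (F : ℝ → ℝ)
    (hXcdf : ∀ i t, (μ {ω | X i ω ≤ t}).toReal = F t)
    (Y : Ω → ℝ)
    (hY : ∀ ω, Y ω = Finset.univ.sup'
      ⟨⟨0, by omega⟩, Finset.mem_univ _⟩ (fun i => X i ω))
    (r v : ℝ) (hrv : r ≤ v) :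
    ∫ ω in {ω | Y ω ≤ v}, max (Y ω) r ∂μ =
      v * F v ^ (n - 1) - ∫ z in r..v, F z ^ (n - 1) := by
  have hYmeas : Measurable Y := by
    rw [funext fun ω => (hY ω).trans (Finset.sup'_apply _ X ω).symm]
    exact Finset.measurable_sup' _ fun i _ => hXmeas i
  have hYcdf (t : ℝ) : μ.real {ω | Y ω ≤ t} = F t ^ (n - 1) := by
    have h := measure_sup'_le_eq_prod hXindep ⟨⟨0, by omega⟩, Finset.mem_univ _⟩ t
    simp only [← hY] at h
    simp [measureReal_def, h, ENNReal.toReal_prod, hXcdf]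
  simp only [setIntegral_max_eq_sub_intervalIntegral_measureReal_le hYmeas hrv, hYcdf]
end

section
/- For every measurable function x : [a,b] → [0,1], ∫_a^b ( v·x(v) − ∫_a^v x(z) dz )·F(v)^{n-1}·f(v) dv = ∫_a^b x(v)·ψ_n(v)·f(v) dv. (In auction terms: for any symmetric all-pay auction whose interim allocation rule is x, the expected maximum payment equals the expected virtual surplus for maximum payment, MP(A) = E[Σ_i x_i(v) ψ_n(v_i)].) -/
open MeasureTheory intervalIntegral Set

/-!
With `g = F ^ (n - 1) * f = (F ^ n / n)'` we have
`∫ z in v..b, g z = (1 - F v ^ n) / n`. Integrating by parts with the absolutely continuous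
primitives of `x` and `g` turns `∫ (∫ z in a..v, x z) * g v` into `∫ x v * ∫ z in v..b, g z`;
the term `∫ v * x v * g v` is common to both sides, and pointwise
`v * g v - (1 - F v ^ n) / n = ψ v * f v`.
-/

theorem IntervalIntegrable.ae_deriv_integral_eq {x : ℝ → ℝ} {a b : ℝ}
    (hx : IntervalIntegrable x volume a b) :
    ∀ᵐ v, v ∈ uIoc a b → deriv (fun v => ∫ z in a..v, x z) v = x v := by
  filter_upwards [hx.ae_hasDerivAt_integral] with v hv hvab
  exact (hv (uIoc_subset_uIcc hvab) a left_mem_uIcc).deriv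

theorem integral_primitive_mul_eq_integral_mul_tail {x g : ℝ → ℝ} {a b : ℝ}
    (hx : IntervalIntegrable x volume a b) (hg : IntervalIntegrable g volume a b) :
    ∫ v in a..b, (∫ z in a..v, x z) * g v = ∫ v in a..b, x v * ∫ z in v..b, g z := by
  set P : ℝ → ℝ := fun v => ∫ z in a..v, x z
  set Q : ℝ → ℝ := fun v => ∫ z in a..v, g z
  have hP := hx.absolutelyContinuousOnInterval_intervalIntegral left_mem_uIcc
  have hQ := hg.absolutelyContinuousOnInterval_intervalIntegral left_mem_uIcc
  have hPg : ∫ v in a..b, P v * deriv Q v = ∫ v in a..b, P v * g v :=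
    integral_congr_ae (hg.ae_deriv_integral_eq.mono fun v h hv => by rw [h hv])
  have hxQ : ∫ v in a..b, deriv P v * Q v = ∫ v in a..b, x v * Q v :=
    integral_congr_ae (hx.ae_deriv_integral_eq.mono fun v h hv => by rw [h hv])
  have htail : EqOn (fun v => x v * ∫ z in v..b, g z) (fun v => x v * Q b - x v * Q v)
      (uIcc a b) := fun v hv => by
    simp only [Q, ← mul_sub,
      integral_interval_sub_left hg (hg.mono_set (uIcc_subset_uIcc_left hv))]
  rw [← hPg, hP.integral_mul_deriv_eq_deriv_mul hQ, hxQ, integral_congr htail,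
    integral_sub (hx.mul_const _) (hx.mul_continuousOn hQ.continuousOn),
    intervalIntegral.integral_mul_const]
  simp [Q]

theorem integral_payment_mul_eq {x g : ℝ → ℝ} {a b : ℝ}
    (hx : IntervalIntegrable x volume a b) (hg : IntervalIntegrable g volume a b)
    (hxg : IntervalIntegrable (fun v => v * x v * g v) volume a b) :
    ∫ v in a..b, (v * x v - ∫ z in a..v, x z) * g v =
      ∫ v in a..b, x v * (v * g v - ∫ z in v..b, g z) := by
  have hPg := hg.continuousOn_mul (continuousOn_primitive_interval' hx left_mem_uIcc)
  have hxT := hx.mul_continuousOn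
    (continuousOn_primitive_interval_left ((intervalIntegrable_iff' (μ := volume)).1 hg))
  simp only [sub_mul, mul_sub]
  rw [integral_sub hxg hPg, integral_sub (by simpa only [mul_left_comm, mul_assoc] using hxg) hxT,
    integral_primitive_mul_eq_integral_mul_tail hx hg]
  congr 2 with v
  ring

theorem IntervalIntegrable.bdd_mul {x g : ℝ → ℝ} {a b C : ℝ}
    (hg : IntervalIntegrable g volume a b) (hx : Measurable x)
    (hC : ∀ v ∈ uIcc a b, |x v| ≤ C) :
    IntervalIntegrable (fun v => x v * g v) volume a b :=
  intervalIntegrable_iff.2 <| (intervalIntegrable_iff.1 hg).bdd_mul hx.aestronglyMeasurable <|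
    ae_restrict_of_forall_mem measurableSet_uIoc fun v hv => hC v (uIoc_subset_uIcc hv)

theorem HasDerivAt.pow_div_self {F : ℝ → ℝ} {f v : ℝ} {n : ℕ} (hn : n ≠ 0)
    (hF : HasDerivAt F f v) : HasDerivAt (fun y => F y ^ n / n) (F v ^ (n - 1) * f) v := by
  have := (hF.pow n).div_const (n : ℝ)
  rwa [mul_assoc, mul_div_cancel_left₀ _ (Nat.cast_ne_zero.2 hn)] at this

theorem intervalIntegrable_pow_mul_of_hasDerivAt {F f : ℝ → ℝ} {a b : ℝ} {n : ℕ} (hn : n ≠ 0)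
    (hF : ∀ v ∈ uIcc a b, HasDerivAt F (f v) v) (hF0 : ∀ v ∈ uIcc a b, 0 ≤ F v)
    (hf : ∀ v ∈ uIcc a b, 0 ≤ f v) :
    IntervalIntegrable (fun v => F v ^ (n - 1) * f v) volume a b :=
  intervalIntegrable_deriv_of_nonneg
    (fun v hv => ((hF v hv).pow_div_self hn).continuousAt.continuousWithinAt)
    (fun v hv => (hF v (Ioo_subset_Icc_self hv)).pow_div_self hn)
    (fun v hv => mul_nonneg (pow_nonneg (hF0 v (Ioo_subset_Icc_self hv)) _)
      (hf v (Ioo_subset_Icc_self hv)))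

theorem max_payment_eq_virtual_surplus_general
    (n : ℕ) (hn : 2 ≤ n) (a b : ℝ) (hab : a < b)
    (F f : ℝ → ℝ)
    (hFmono : StrictMonoOn F (Set.Icc a b))
    (hFa : F a = 0) (hFb : F b = 1)
    (hfpos : ∀ x ∈ Set.Icc a b, 0 < f x)
    (hderiv : ∀ x ∈ Set.Icc a b, HasDerivAt F (f x) x)
    (ψ : ℝ → ℝ)
    (hψ : ∀ v, ψ v = v * F v ^ (n - 1) - (1 - F v ^ n) / (n * f v))
    (x : ℝ → ℝ) (hx_meas : Measurable x)
    (hx_range : ∀ v ∈ Set.Icc a b, x v ∈ Set.Icc (0 : ℝ) 1) :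
    ∫ v in a..b, (v * x v - ∫ z in a..v, x z) * F v ^ (n - 1) * f v =
      ∫ v in a..b, x v * ψ v * f v := by
  have hn0 : n ≠ 0 := by omega
  have hIcc : uIcc a b = Icc a b := uIcc_of_le hab.le
  have hF_nonneg : ∀ v ∈ Icc a b, 0 ≤ F v := fun v hv =>
    hFa ▸ hFmono.monotoneOn (left_mem_Icc.2 hab.le) hv hv.1
  set g : ℝ → ℝ := fun v => F v ^ (n - 1) * f v
  have hg : IntervalIntegrable g volume a b := by
    refine intervalIntegrable_pow_mul_of_hasDerivAt hn0 ?_ ?_ ?_ <;> rw [hIcc]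
    exacts [hderiv, hF_nonneg, fun v hv => (hfpos v hv).le]
  have htail : ∀ v ∈ Icc a b, ∫ z in v..b, g z = (1 - F v ^ n) / n := fun v hv => by
    have hsub : uIcc v b ⊆ Icc a b := uIcc_of_le hv.2 ▸ Icc_subset_Icc_left hv.1
    rw [integral_eq_sub_of_hasDerivAt (fun z hz => (hderiv z (hsub hz)).pow_div_self hn0)
      (hg.mono_set (hIcc ▸ hsub)), hFb]
    ring
  have hx_bound : ∀ v ∈ uIcc a b, |x v| ≤ 1 := fun v hv => by
    obtain ⟨h0, h1⟩ := hx_range v (hIcc ▸ hv)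
    exact abs_le.2 ⟨by linarith, h1⟩
  have hx : IntervalIntegrable x volume a b := by
    simpa using (intervalIntegrable_const (c := (1 : ℝ))).bdd_mul hx_meas hx_bound
  have hxg : IntervalIntegrable (fun v => v * x v * g v) volume a b := by
    simpa only [id_eq, mul_left_comm, mul_assoc] using
      (hg.continuousOn_mul continuousOn_id).bdd_mul hx_meas hx_bound
  simp only [mul_assoc (_ - _)]
  rw [integral_payment_mul_eq hx hg hxg]
  refine integral_congr fun v hv => ?_
  rw [hIcc] at hv
  simp only [htail v hv, hψ, g]
  field_simp [(hfpos v hv).ne']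

/-- **Expected maximum payment equals expected virtual surplus.**
`n ≥ 2` agents have values drawn i.i.d. from a distribution with continuous,
strictly increasing cdf `F`, density `f` positive on the support `[a, b]`,
`F a = 0`, `F b = 1`.  With the virtual value for maximum payment
`ψ_n(v) = v * F v ^ (n-1) - (1 - F v ^ n) / (n * f v)`, for every measurable
interim allocation rule `x : [a,b] → [0,1]`,
`∫ v in a..b, (v * x v - ∫ z in a..v, x z) * F v ^ (n-1) * f v
  = ∫ v in a..b, x v * ψ_n v * f v`. -/
theorem max_payment_eq_virtual_surplus
    (n : ℕ) (hn : 2 ≤ n) (a b : ℝ) (hab : a < b)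
    (F f : ℝ → ℝ)
    (hFcont : Continuous F)
    (hFmono : StrictMonoOn F (Set.Icc a b))
    (hFa : F a = 0) (hFb : F b = 1)
    (hfpos : ∀ x ∈ Set.Icc a b, 0 < f x)
    (hderiv : ∀ x ∈ Set.Icc a b, HasDerivAt F (f x) x)
    (ψ : ℝ → ℝ)
    (hψ : ∀ v, ψ v = v * F v ^ (n - 1) - (1 - F v ^ n) / (n * f v))
    (x : ℝ → ℝ) (hx_meas : Measurable x)
    (hx_range : ∀ v ∈ Set.Icc a b, x v ∈ Set.Icc (0 : ℝ) 1) :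
    ∫ v in a..b, (v * x v - ∫ z in a..v, x z) * F v ^ (n - 1) * f v =
      ∫ v in a..b, x v * ψ v * f v :=
  max_payment_eq_virtual_surplus_general n hn a b hab F f hFmono hFa hFb hfpos hderiv ψ hψ x hx_meas
    hx_range
end

section
/- Suppose the virtual value for maximum payment ψ_n is nondecreasing on [a,b], and let r = inf{ z ∈ [a,b] : ψ_n(z) ≥ 0 }. Then for every measurable allocation rule x : [a,b]^n → [0,1]^n with Σ_{i=1}^n x_i(v) ≤ 1 for all v, the expected virtual surplus satisfies E_{V ~ F^{⊗n}}[ Σ_{i=1}^n x_i(V)·ψ_n(V_i) ] ≤ n·∫_r^b ψ_n(v)·F(v)^{n-1}·f(v) dv, and the right-hand side is the expected virtual surplus of the allocation rule that gives the entire reward to the agent with the highest value whenever that value is at least r. (Hence for an n-regular distribution the optimal all-pay auction is a highest-bid-wins auction with a reserve price.) -/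
/-!
Because `ψ` is nondecreasing on `[a, b]` and the allocation shares sum to at most one, the
virtual surplus of any allocation is pointwise at most `max (ψ (max_i V i)) 0`. The maximum of
`n` i.i.d. values has cdf `F ^ n`, hence density `n * F ^ (n - 1) * f`, so the expectation of this
bound is `∫_a^b max ψ 0 * n * F ^ (n - 1) * f`; by monotonicity `max ψ 0` vanishes below the
reserve `r` and equals `ψ` above it.
-/

open MeasureTheory intervalIntegral Set

section Density

variable {G g : ℝ → ℝ} {a b : ℝ}

theorem lintegral_Icc_ofReal_eq_sub_of_hasDerivAt (hab : a ≤ b)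
    (hderiv : ∀ x ∈ Icc a b, HasDerivAt G (g x) x) (hg : ∀ x ∈ Icc a b, 0 ≤ g x) :
    ∫⁻ x in Icc a b, ENNReal.ofReal (g x) = ENNReal.ofReal (G b - G a) := by
  have hcont : ContinuousOn G (Icc a b) := fun x hx =>
    (hderiv x hx).continuousAt.continuousWithinAt
  have hderiv' : ∀ x ∈ Ioo a b, HasDerivAt G (g x) x := fun x hx =>
    hderiv x (Ioo_subset_Icc_self hx)
  have hint : IntegrableOn g (Ioc a b) :=
    integrableOn_deriv_of_nonneg hcont hderiv' fun x hx => hg x (Ioo_subset_Icc_self hx)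
  rw [← ofReal_integral_eq_lintegral_ofReal ((integrableOn_Icc_iff_integrableOn_Ioc).2 hint)
      ((ae_restrict_iff' measurableSet_Icc).2 (.of_forall hg)),
    integral_Icc_eq_integral_Ioc, ← integral_of_le hab,
    integral_eq_sub_of_hasDerivAt_of_le hab hcont hderiv'
      ((intervalIntegrable_iff_integrableOn_Ioc_of_le hab).2 hint)]

theorem withDensity_ofReal_restrict_Icc_Iic
    (hderiv : ∀ x ∈ Icc a b, HasDerivAt G (g x) x) (hg : ∀ x ∈ Icc a b, 0 ≤ g x) (t : ℝ) :
    (volume.restrict (Icc a b)).withDensity (fun x => ENNReal.ofReal (g x)) (Iic t) =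
      ENNReal.ofReal (G (max a (min t b)) - G a) := by
  have hset : Iic t ∩ Icc a b = Icc a (min t b) := by
    ext v; simp only [mem_inter_iff, mem_Iic, mem_Icc, le_min_iff]; tauto
  rw [withDensity_apply _ measurableSet_Iic, Measure.restrict_restrict measurableSet_Iic, hset]
  rcases lt_or_ge (min t b) a with hta | hat
  · rw [Icc_eq_empty hta.not_ge, Measure.restrict_empty, lintegral_zero_measure,
      max_eq_left hta.le, sub_self, ENNReal.ofReal_zero]
  · rw [max_eq_right hat, lintegral_Icc_ofReal_eq_sub_of_hasDerivAt hat
      (fun x hx => hderiv x ⟨hx.1, hx.2.trans (min_le_right _ _)⟩)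
      (fun x hx => hg x ⟨hx.1, hx.2.trans (min_le_right _ _)⟩)]

theorem isProbabilityMeasure_withDensity_ofReal_restrict_Icc (hab : a ≤ b)
    (hderiv : ∀ x ∈ Icc a b, HasDerivAt G (g x) x) (hg : ∀ x ∈ Icc a b, 0 ≤ g x)
    (hG : G b - G a = 1) :
    IsProbabilityMeasure
      ((volume.restrict (Icc a b)).withDensity fun x => ENNReal.ofReal (g x)) := by
  constructor
  rw [withDensity_apply _ MeasurableSet.univ, Measure.restrict_univ,
    lintegral_Icc_ofReal_eq_sub_of_hasDerivAt hab hderiv hg, hG, ENNReal.ofReal_one]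

end Density

theorem integral_withDensity_ofReal {α : Type*} [MeasurableSpace α] {ρ : Measure α}
    {g : α → ℝ} (hgm : Measurable g) (hg : 0 ≤ᵐ[ρ] g) (h : α → ℝ) :
    ∫ v, h v ∂ρ.withDensity (fun x => ENNReal.ofReal (g x)) = ∫ v, h v * g v ∂ρ := by
  rw [integral_withDensity_eq_integral_toReal_smul hgm.ennreal_ofReal
    (.of_forall fun _ => ENNReal.ofReal_lt_top)]
  refine integral_congr_ae ?_
  filter_upwards [hg] with v hv
  rw [ENNReal.toReal_ofReal hv, smul_eq_mul, mul_comm]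

section Maximum

open Finset

variable {ι : Type*} [Fintype ι]

theorem sum_mul_le_max_zero_of_monotoneOn {α : Type*} [Preorder α] {ψ : α → ℝ} {s : Set α}
    (hψ : MonotoneOn ψ s) {V : ι → α} {m : α} (hV : ∀ i, V i ∈ s) (hm : m ∈ s)
    (hVm : ∀ i, V i ≤ m) {x : ι → ℝ} (hx0 : ∀ i, 0 ≤ x i) (hx1 : ∑ i, x i ≤ 1) :
    ∑ i, x i * ψ (V i) ≤ max (ψ m) 0 :=
  calc ∑ i, x i * ψ (V i) ≤ ∑ i, x i * max (ψ m) 0 :=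
        sum_le_sum fun i _ => mul_le_mul_of_nonneg_left
          ((hψ (hV i) hm (hVm i)).trans (le_max_left _ _)) (hx0 i)
    _ = (∑ i, x i) * max (ψ m) 0 := (sum_mul _ _ _).symm
    _ ≤ max (ψ m) 0 := mul_le_of_le_one_left (le_max_right _ _) hx1

variable [Nonempty ι]

theorem measurable_sup'_univ :
    Measurable fun V : ι → ℝ => univ.sup' univ_nonempty V := by
  have h : (fun V : ι → ℝ => univ.sup' univ_nonempty V) =
      univ.sup' univ_nonempty fun i (V : ι → ℝ) => V i := by
    ext V; rw [Finset.sup'_apply]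
  exact h ▸ Finset.measurable_sup' _ fun i _ => measurable_pi_apply i

theorem MeasureTheory.Measure.map_sup'_pi_eq_of_Iic (μ ν : Measure ℝ) [IsFiniteMeasure μ]
    (h : ∀ t, ν (Iic t) = μ (Iic t) ^ Fintype.card ι) :
    (Measure.pi fun _ : ι => μ).map (fun V => univ.sup' univ_nonempty V) = ν := by
  refine Measure.ext_of_Iic _ _ fun t => ?_
  have hpre : (fun V : ι → ℝ => univ.sup' univ_nonempty V) ⁻¹' Iic t =
      Set.univ.pi fun _ => Iic t := by
    ext V; simp [Finset.sup'_le_iff, Pi.le_def]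
  rw [Measure.map_apply measurable_sup'_univ measurableSet_Iic, hpre, Measure.pi_pi,
    prod_const, card_univ, h t]

end Maximum

theorem integral_mono_ae_of_nonneg_right {α : Type*} [MeasurableSpace α] {μ : Measure α}
    {f g : α → ℝ} (hg : 0 ≤ᵐ[μ] g) (hgi : Integrable g μ) (h : f ≤ᵐ[μ] g) :
    ∫ x, f x ∂μ ≤ ∫ x, g x ∂μ := by
  by_cases hfi : Integrable f μ
  · exact integral_mono_ae hfi hgi h
  · rw [integral_undef hfi]
    exact integral_nonneg_of_ae hg

open Finset in
theorem integral_sum_mul_le_integral_max_zero_map_sup' {ι : Type*} [Fintype ι] [Nonempty ι]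
    {μ : Measure ℝ} [IsProbabilityMeasure μ] {a b : ℝ} (hμ : ∀ᵐ v ∂μ, v ∈ Icc a b)
    {ψ : ℝ → ℝ} (hψm : Measurable ψ) (hψ : MonotoneOn ψ (Icc a b))
    (x : (ι → ℝ) → ι → ℝ) (hx0 : ∀ V i, 0 ≤ x V i) (hx1 : ∀ V, ∑ i, x V i ≤ 1) :
    ∫ V, ∑ i, x V i * ψ (V i) ∂(Measure.pi fun _ : ι => μ) ≤
      ∫ v, max (ψ v) 0 ∂(Measure.pi fun _ : ι => μ).map fun V => univ.sup' univ_nonempty V := by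
  set m : (ι → ℝ) → ℝ := fun V => univ.sup' univ_nonempty V
  have hcoord : ∀ᵐ V ∂(Measure.pi fun _ : ι => μ), ∀ i, V i ∈ Icc a b :=
    ae_all_iff.2 fun _ => Measure.tendsto_eval_ae_ae.eventually hμ
  have hmax : ∀ V : ι → ℝ, (∀ i, V i ∈ Icc a b) → m V ∈ Icc a b := fun V hV =>
    ⟨(hV (Classical.arbitrary ι)).1.trans (le_sup' V (mem_univ _)),
      sup'_le _ _ fun i _ => (hV i).2⟩
  rw [integral_map (measurable_sup'_univ (ι := ι)).aemeasurable
    (hψm.max measurable_const).aestronglyMeasurable]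
  refine integral_mono_ae_of_nonneg_right (.of_forall fun _ => le_max_right _ _) ?_ ?_
  · refine Integrable.of_bound
      ((hψm.max measurable_const).comp measurable_sup'_univ).aestronglyMeasurable
      (max (ψ b) 0) ?_
    filter_upwards [hcoord] with V hV
    have hmV := hmax V hV
    rw [Real.norm_of_nonneg (le_max_right _ _)]
    exact max_le_max_right 0 (hψ hmV ⟨hmV.1.trans hmV.2, le_rfl⟩ hmV.2)
  · filter_upwards [hcoord] with V hV
    exact sum_mul_le_max_zero_of_monotoneOn hψ hV (hmax V hV) (fun i => le_sup' V (mem_univ i))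
      (hx0 V) (hx1 V)

theorem setIntegral_Icc_max_zero_mul_eq_intervalIntegral {ψ : ℝ → ℝ} {a b : ℝ}
    (hψ : MonotoneOn ψ (Icc a b)) (hne : {z ∈ Icc a b | 0 ≤ ψ z}.Nonempty) (g : ℝ → ℝ) :
    ∫ v in Icc a b, max (ψ v) 0 * g v = ∫ v in sInf {z ∈ Icc a b | 0 ≤ ψ z}..b, ψ v * g v := by
  set r := sInf {z ∈ Icc a b | 0 ≤ ψ z}
  have hbdd : BddBelow {z ∈ Icc a b | 0 ≤ ψ z} := ⟨a, fun z hz => hz.1.1⟩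
  have hra : a ≤ r := le_csInf hne fun z hz => hz.1.1
  have hrb : r ≤ b := by
    obtain ⟨_, hz⟩ := hne
    exact (csInf_le hbdd hz).trans hz.1.2
  have hpos : ∀ v ∈ Ioc r b, 0 ≤ ψ v := fun v hv => by
    obtain ⟨z, hz, hzv⟩ := (csInf_lt_iff hbdd hne).1 hv.1
    exact hz.2.trans (hψ hz.1 ⟨hz.1.1.trans hzv.le, hv.2⟩ hzv.le)
  have hneg : ∀ v ∈ Ico a r, ψ v < 0 := fun v hv =>
    not_le.1 fun h => notMem_of_lt_csInf hv.2 hbdd ⟨⟨hv.1, hv.2.le.trans hrb⟩, h⟩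
  calc ∫ v in Icc a b, max (ψ v) 0 * g v
      = ∫ v in Icc a b, (Ioc r b).indicator (fun v => ψ v * g v) v := by
        refine setIntegral_congr_ae measurableSet_Icc ?_
        filter_upwards [volume.ae_ne r] with v hvr hv
        rcases hvr.lt_or_gt with hlt | hgt
        · rw [indicator_of_notMem fun h => h.1.not_gt hlt, max_eq_right (hneg v ⟨hv.1, hlt⟩).le,
            zero_mul]
        · rw [indicator_of_mem (show v ∈ Ioc r b from ⟨hgt, hv.2⟩),
            max_eq_left (hpos v ⟨hgt, hv.2⟩)]
    _ = ∫ v in Ioc r b, ψ v * g v := by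
        rw [setIntegral_indicator measurableSet_Ioc,
          inter_eq_self_of_subset_right (Ioc_subset_Icc_self.trans (Icc_subset_Icc_left hra))]
    _ = ∫ v in r..b, ψ v * g v := (integral_of_le hrb).symm

theorem map_sup'_pi_withDensity_eq {n : ℕ} [NeZero n] {F f : ℝ → ℝ} {a b : ℝ} (hab : a ≤ b)
    (hderiv : ∀ x ∈ Icc a b, HasDerivAt F (f x) x) (hf : ∀ x ∈ Icc a b, 0 ≤ f x)
    (hF : ∀ x ∈ Icc a b, 0 ≤ F x) (hFa : F a = 0) (hFb : F b = 1) :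
    (Measure.pi fun _ : Fin n =>
        (volume.restrict (Icc a b)).withDensity fun v => ENNReal.ofReal (f v)).map
        (fun V => Finset.univ.sup' Finset.univ_nonempty V) =
      (volume.restrict (Icc a b)).withDensity
        fun v => ENNReal.ofReal (n * F v ^ (n - 1) * f v) := by
  have hderiv_pow : ∀ x ∈ Icc a b, HasDerivAt (fun y => F y ^ n) (n * F x ^ (n - 1) * f x) x :=
    fun x hx => (hderiv x hx).fun_pow n
  have hdensity : ∀ x ∈ Icc a b, 0 ≤ (n : ℝ) * F x ^ (n - 1) * f x := fun x hx => by
    have := hF x hx; have := hf x hx; positivity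
  have := isProbabilityMeasure_withDensity_ofReal_restrict_Icc hab hderiv hf
    (by rw [hFa, hFb, sub_zero])
  refine Measure.map_sup'_pi_eq_of_Iic _ _ fun t => ?_
  rw [withDensity_ofReal_restrict_Icc_Iic hderiv_pow hdensity,
    withDensity_ofReal_restrict_Icc_Iic hderiv hf, hFa, zero_pow (NeZero.ne n), sub_zero,
    sub_zero, Fintype.card_fin,
    ENNReal.ofReal_pow (hF _ ⟨le_max_left _ _, max_le hab (min_le_right _ _)⟩)]

open Finset in
theorem regular_optimal_is_reserve_auction_general
    (n : ℕ) (hn : 2 ≤ n) (a b : ℝ) (hab : a < b) (hb : 0 ≤ b)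
    (F f : ℝ → ℝ)
    (hFcont : Continuous F)
    (hFmono : StrictMonoOn F (Set.Icc a b))
    (hFa : F a = 0) (hFb : F b = 1)
    (hfmeas : Measurable f)
    (hfpos : ∀ x ∈ Set.Icc a b, 0 < f x)
    (hderiv : ∀ x ∈ Set.Icc a b, HasDerivAt F (f x) x)
    (ψ : ℝ → ℝ)
    (hψ : ∀ v, ψ v = v * F v ^ (n - 1) - (1 - F v ^ n) / (n * f v))
    (hreg : MonotoneOn ψ (Set.Icc a b))
    (r : ℝ) (hr : r = sInf {z ∈ Set.Icc a b | 0 ≤ ψ z})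
    (μ : Measure ℝ)
    (hμ : μ = (volume.restrict (Set.Icc a b)).withDensity
      (fun v => ENNReal.ofReal (f v)))
    (x : (Fin n → ℝ) → Fin n → ℝ)
    (hx_range : ∀ v i, x v i ∈ Set.Icc (0 : ℝ) 1)
    (hx_sum : ∀ v, ∑ i, x v i ≤ 1) :
    ∫ V, (∑ i, x V i * ψ (V i)) ∂(Measure.pi fun _ : Fin n => μ) ≤
      (n : ℝ) * ∫ v in r..b, ψ v * F v ^ (n - 1) * f v := by
  have : NeZero n := ⟨by omega⟩
  have hF0 : ∀ v ∈ Icc a b, 0 ≤ F v := fun v hv =>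
    hFa ▸ hFmono.monotoneOn (left_mem_Icc.2 hab.le) hv hv.1
  have hf0 : ∀ v ∈ Icc a b, 0 ≤ f v := fun v hv => (hfpos v hv).le
  have hFm := hFcont.measurable
  have hψm : Measurable ψ := by rw [funext hψ]; fun_prop
  have hψb : ψ b = b := by simp [hψ b, hFb]
  have : IsProbabilityMeasure μ := hμ ▸ isProbabilityMeasure_withDensity_ofReal_restrict_Icc
    hab.le hderiv hf0 (by rw [hFa, hFb, sub_zero])
  have hsupp : ∀ᵐ v ∂μ, v ∈ Icc a b :=
    hμ ▸ (withDensity_absolutelyContinuous _ _).ae_le (ae_restrict_mem measurableSet_Icc)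
  calc _ ≤ ∫ v, max (ψ v) 0 ∂(Measure.pi fun _ : Fin n => μ).map
          fun V => univ.sup' univ_nonempty V :=
        integral_sum_mul_le_integral_max_zero_map_sup' hsupp hψm hreg x
          (fun V i => (hx_range V i).1) hx_sum
    _ = ∫ v in Icc a b, max (ψ v) 0 * (n * F v ^ (n - 1) * f v) := by
        rw [hμ, map_sup'_pi_withDensity_eq hab.le hderiv hf0 hF0 hFa hFb,
          integral_withDensity_ofReal (by fun_prop) ((ae_restrict_iff' measurableSet_Icc).2
            (.of_forall fun v hv => by have := hF0 v hv; have := hf0 v hv; positivity))]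
    _ = ∫ v in r..b, ψ v * (n * F v ^ (n - 1) * f v) := by
        rw [hr]
        exact setIntegral_Icc_max_zero_mul_eq_intervalIntegral hreg
          ⟨b, right_mem_Icc.2 hab.le, hψb.symm ▸ hb⟩ _
    _ = n * ∫ v in r..b, ψ v * F v ^ (n - 1) * f v := by
        rw [← intervalIntegral.integral_const_mul]
        exact integral_congr fun v _ => by ring

/-- **For `n`-regular distributions, the highest-value-wins auction with the
appropriate reserve maximizes expected virtual surplus for maximum payment.**
`n ≥ 2` agents have values drawn i.i.d. from the distribution `μ` on `[a, b]`
with density `f` and cdf `F` (continuous, strictly increasing, `F a = 0`,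
`F b = 1`, `f` positive on `[a,b]`).  Suppose the virtual value for maximum
payment `ψ_n(v) = v * F v ^ (n-1) - (1 - F v ^ n)/(n * f v)` is nondecreasing
on `[a, b]`, and let `r = inf { z ∈ [a,b] | ψ_n z ≥ 0 }`.  Then every
measurable allocation rule `x : [a,b]^n → [0,1]^n` with `∑ i, x v i ≤ 1` has
expected virtual surplus at most `n * ∫ v in r..b, ψ_n v * F v ^ (n-1) * f v`,
the expected virtual surplus of serving the highest value above `r`. -/
theorem regular_optimal_is_reserve_auction
    (n : ℕ) (hn : 2 ≤ n) (a b : ℝ) (hab : a < b) (hb : 0 ≤ b)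
    (F f : ℝ → ℝ)
    (hFcont : Continuous F)
    (hFmono : StrictMonoOn F (Set.Icc a b))
    (hFa : F a = 0) (hFb : F b = 1)
    (hfmeas : Measurable f)
    (hfpos : ∀ x ∈ Set.Icc a b, 0 < f x)
    (hderiv : ∀ x ∈ Set.Icc a b, HasDerivAt F (f x) x)
    (ψ : ℝ → ℝ)
    (hψ : ∀ v, ψ v = v * F v ^ (n - 1) - (1 - F v ^ n) / (n * f v))
    (hreg : MonotoneOn ψ (Set.Icc a b))
    (r : ℝ) (hr : r = sInf {z ∈ Set.Icc a b | 0 ≤ ψ z})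
    (μ : Measure ℝ)
    (hμ : μ = (volume.restrict (Set.Icc a b)).withDensity
      (fun v => ENNReal.ofReal (f v)))
    (x : (Fin n → ℝ) → Fin n → ℝ)
    (hx_meas : ∀ i, Measurable (fun v => x v i))
    (hx_range : ∀ v i, x v i ∈ Set.Icc (0 : ℝ) 1)
    (hx_sum : ∀ v, ∑ i, x v i ≤ 1) :
    ∫ V, (∑ i, x V i * ψ (V i)) ∂(Measure.pi fun _ : Fin n => μ) ≤
      (n : ℝ) * ∫ v in r..b, ψ v * F v ^ (n - 1) * f v :=
  regular_optimal_is_reserve_auction_general n hn a b hab hb F f hFcont hFmono hFa hFb hfmeas hfpos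
    hderiv ψ hψ hreg r hr μ hμ x hx_range hx_sum
end

section
/- If the hazard rate h(z) = f(z)/(1 − F(z)) is nondecreasing on [a,b), then for any z_1 ≤ z_2 in [a,b) such that ψ_n(z) ≥ 0 for all z ∈ [z_1, z_2], one has ψ_n(z_1) ≤ ψ_n(z_2); that is, over any interval of values on which ψ_n is nonnegative, ψ_n is monotone nondecreasing. -/
/-!
Writing `S(x) = ∑_{k<n} x ^ k`, so that `1 - F ^ n = (1 - F) S(F)`, the virtual value factors as
`ψ_n = F ^ (n-1) · (z - (1 / h) · (S(F) / F ^ (n-1)) / n)`. Under MHR `1 / h` is nonincreasing, and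
`S(x) / x ^ (n-1) = ∑_{j<n} x ^ (-j)` is nonincreasing in `x`, so the second factor is nondecreasing
in `z`; where it is nonnegative, `ψ_n` is a product of two nonnegative nondecreasing factors.
-/

open Finset

lemma one_sub_pow_div_eq (x g : ℝ) (n : ℕ) :
    (1 - x ^ n) / (n * g) = (1 - x) / g * (∑ k ∈ range n, x ^ k) / n := by
  rw [← mul_neg_geom_sum]
  ring

/-- The cross-multiplied form of the antitonicity of `x ↦ (∑ k < n, x ^ k) / x ^ (n - 1)`. -/
lemma geom_sum_mul_pow_pred_le (n : ℕ) {x y : ℝ} (hx : 0 ≤ x) (hxy : x ≤ y) :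
    (∑ k ∈ range n, y ^ k) * x ^ (n - 1) ≤ (∑ k ∈ range n, x ^ k) * y ^ (n - 1) := by
  rw [sum_mul, sum_mul]
  refine sum_le_sum fun k hk => ?_
  obtain ⟨m, hm⟩ : ∃ m, n - 1 = k + m := ⟨n - 1 - k, by grind⟩
  rw [hm, pow_add, pow_add]
  calc y ^ k * (x ^ k * x ^ m) = x ^ k * (y ^ k * x ^ m) := by ring
    _ ≤ x ^ k * (y ^ k * y ^ m) := by have := hx.trans hxy; gcongr

/-- If `p₁ = 0` the left side is `-c₁ ≤ 0`; otherwise multiply through by `p₁ > 0`. -/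
lemma mul_sub_le_mul_sub_of_mul_le_mul {p₁ p₂ c₁ c₂ z₁ z₂ : ℝ} (hp₁ : 0 ≤ p₁) (hp : p₁ ≤ p₂)
    (hc₁ : 0 ≤ c₁) (hc : c₂ * p₁ ≤ c₁ * p₂) (hz : z₁ ≤ z₂)
    (h₁ : 0 ≤ z₁ * p₁ - c₁) (h₂ : 0 ≤ z₂ * p₂ - c₂) :
    z₁ * p₁ - c₁ ≤ z₂ * p₂ - c₂ := by
  rcases hp₁.eq_or_lt with rfl | hp₁
  · linarith
  refine le_of_mul_le_mul_left ?_ hp₁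
  have hp₂ : 0 < p₂ := hp₁.trans_le hp
  calc p₁ * (z₁ * p₁ - c₁) ≤ p₂ * (z₁ * p₁ - c₁) := by gcongr
    _ ≤ p₁ * (z₂ * p₂ - c₂) := by nlinarith [mul_pos hp₁ hp₂]

lemma mul_pow_pred_sub_geom_sum_le (n : ℕ) {x y r₁ r₂ z₁ z₂ : ℝ} (hx : 0 ≤ x) (hxy : x ≤ y)
    (hr₂ : 0 ≤ r₂) (hr : r₂ ≤ r₁) (hz : z₁ ≤ z₂)
    (h₁ : 0 ≤ z₁ * x ^ (n - 1) - r₁ * (∑ k ∈ range n, x ^ k) / n)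
    (h₂ : 0 ≤ z₂ * y ^ (n - 1) - r₂ * (∑ k ∈ range n, y ^ k) / n) :
    z₁ * x ^ (n - 1) - r₁ * (∑ k ∈ range n, x ^ k) / n ≤
      z₂ * y ^ (n - 1) - r₂ * (∑ k ∈ range n, y ^ k) / n := by
  have hr₁ : 0 ≤ r₁ := hr₂.trans hr
  refine mul_sub_le_mul_sub_of_mul_le_mul (pow_nonneg hx _) (pow_le_pow_left₀ hx hxy _)
    (by positivity) ?_ hz h₁ h₂
  rw [div_mul_eq_mul_div, div_mul_eq_mul_div, mul_assoc, mul_assoc]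
  gcongr ?_ / _
  exact mul_le_mul hr (geom_sum_mul_pow_pred_le n hx hxy)
    (mul_nonneg (sum_nonneg fun k _ => pow_nonneg (hx.trans hxy) k) (pow_nonneg hx _)) hr₁

theorem mhr_virtual_value_monotone_on_nonneg_general
    (n : ℕ) (a b : ℝ)
    (F f : ℝ → ℝ)
    (hFmono : StrictMonoOn F (Set.Icc a b))
    (hFa : F a = 0) (hFb : F b = 1)
    (hfpos : ∀ x ∈ Set.Icc a b, 0 < f x)
    (ψ : ℝ → ℝ)
    (hψ : ∀ v, ψ v = v * F v ^ (n - 1) - (1 - F v ^ n) / (n * f v))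
    (hMHR : MonotoneOn (fun z => f z / (1 - F z)) (Set.Ico a b))
    (z₁ z₂ : ℝ) (hz₁ : z₁ ∈ Set.Ico a b) (hz₂ : z₂ ∈ Set.Ico a b)
    (h12 : z₁ ≤ z₂)
    (hnonneg : ∀ z ∈ Set.Icc z₁ z₂, 0 ≤ ψ z) :
    ψ z₁ ≤ ψ z₂ := by
  have hz₁I : z₁ ∈ Set.Icc a b := Set.Ico_subset_Icc_self hz₁
  have hz₂I : z₂ ∈ Set.Icc a b := Set.Ico_subset_Icc_self hz₂
  have haI : a ∈ Set.Icc a b := Set.left_mem_Icc.2 (hz₁.1.trans hz₁.2.le)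
  have hbI : b ∈ Set.Icc a b := Set.right_mem_Icc.2 (hz₁.1.trans hz₁.2.le)
  have hF₁ : 0 ≤ F z₁ := hFa ▸ hFmono.monotoneOn haI hz₁I hz₁.1
  have hF₁₂ : F z₁ ≤ F z₂ := hFmono.monotoneOn hz₁I hz₂I h12
  have hF₂ : F z₂ < 1 := hFb ▸ hFmono hz₂I hbI hz₂.2
  have hf₁ := hfpos z₁ hz₁I
  have hf₂ := hfpos z₂ hz₂I
  have hinv_hazard : (1 - F z₂) / f z₂ ≤ (1 - F z₁) / f z₁ := by
    simpa only [one_div_div] using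
      one_div_le_one_div_of_le (div_pos hf₁ (by linarith)) (hMHR hz₁ hz₂ h12)
  have hψ' : ∀ z, ψ z = z * F z ^ (n - 1) - (1 - F z) / f z * (∑ k ∈ range n, F z ^ k) / n :=
    fun z => by rw [hψ, one_sub_pow_div_eq]
  have h₁ := hnonneg z₁ ⟨le_rfl, h12⟩
  have h₂ := hnonneg z₂ ⟨h12, le_rfl⟩
  rw [hψ'] at h₁ h₂
  rw [hψ', hψ']
  exact mul_pow_pred_sub_geom_sum_le n hF₁ hF₁₂ (div_nonneg (by linarith) hf₂.le)
    hinv_hazard h12 h₁ h₂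

/-- **MHR implies the virtual value for maximum payment is nondecreasing
wherever it is nonnegative.**  `n ≥ 2` agents have values drawn i.i.d. from a
distribution with continuous, strictly increasing cdf `F`, density `f`
positive on the support `[a,b]`, `F a = 0`, `F b = 1`.  If the hazard rate
`h(z) = f z / (1 - F z)` is nondecreasing on `[a, b)`, then for any
`z₁ ≤ z₂` in `[a, b)` such that `ψ_n(z) ≥ 0` for all `z ∈ [z₁, z₂]`, where
`ψ_n(z) = z * F z ^ (n-1) - (1 - F z ^ n)/(n * f z)`, we have
`ψ_n z₁ ≤ ψ_n z₂`. -/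
theorem mhr_virtual_value_monotone_on_nonneg
    (n : ℕ) (hn : 2 ≤ n) (a b : ℝ) (hab : a < b)
    (F f : ℝ → ℝ)
    (hFcont : Continuous F)
    (hFmono : StrictMonoOn F (Set.Icc a b))
    (hFa : F a = 0) (hFb : F b = 1)
    (hfpos : ∀ x ∈ Set.Icc a b, 0 < f x)
    (hderiv : ∀ x ∈ Set.Icc a b, HasDerivAt F (f x) x)
    (ψ : ℝ → ℝ)
    (hψ : ∀ v, ψ v = v * F v ^ (n - 1) - (1 - F v ^ n) / (n * f v))
    (hMHR : MonotoneOn (fun z => f z / (1 - F z)) (Set.Ico a b))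
    (z₁ z₂ : ℝ) (hz₁ : z₁ ∈ Set.Ico a b) (hz₂ : z₂ ∈ Set.Ico a b)
    (h12 : z₁ ≤ z₂)
    (hnonneg : ∀ z ∈ Set.Icc z₁ z₂, 0 ≤ ψ z) :
    ψ z₁ ≤ ψ z₂ :=
  mhr_virtual_value_monotone_on_nonneg_general n a b F f hFmono hFa hFb hfpos ψ hψ hMHR z₁ z₂ hz₁
    hz₂ h12 hnonneg
end

section
/- Suppose the hazard rate h(z) = f(z)/(1 − F(z)) is nondecreasing on [a,b). Then the set { z ∈ [a,b] : ψ_n(z) ≥ 0 } is an interval [r, b], and for every measurable allocation rule x : [a,b]^n → [0,1]^n with Σ_{i=1}^n x_i(v) ≤ 1 for all v, E_{V ~ F^{⊗n}}[ Σ_{i=1}^n x_i(V)·ψ_n(V_i) ] ≤ n·∫_r^b ψ_n(v)·F(v)^{n-1}·f(v) dv. (Hence for MHR distributions the optimal all-pay auction is a highest-bid-wins auction with a reserve price.) -/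
/-!
With `t = F z` and the hazard rate `h = f z / (1 - F z)`, the identity
`1 - t ^ n = (1 - t) t ^ (n - 1) ∑_{j < n} t⁻ʲ` gives
`ψ_n z = t ^ (n - 1) (z - (∑_{j < n} t⁻ʲ) / (n h))`.
Under MHR the bracket is nondecreasing in `z`, so once `ψ_n` is nonnegative it stays
nonnegative and grows. As `ψ_n` is continuous and `ψ_n b = b ≥ 0`, `{ψ_n ≥ 0}` is an
interval `[r, b]` and `ψ_n⁺` is monotone on `[a, b]`. Hence pointwise
`∑ x_i ψ_n(V_i) ≤ ψ_n⁺(max V) ≤ ∑_i ψ_n⁺(V_i) 1[V_i is a highest value]`, and integrating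
out the other coordinates turns the expectation of the `i`-th term into
`∫ ψ_n⁺ F ^ (n - 1) f = ∫_r^b ψ_n F ^ (n - 1) f`.
-/

open MeasureTheory Finset

lemma one_sub_pow_eq_mul_geom_sum_inv {K : Type*} [Field K] {t : K} (ht : t ≠ 0) (n : ℕ) :
    1 - t ^ n = (1 - t) * t ^ (n - 1) * ∑ j ∈ range n, t⁻¹ ^ j := by
  cases n with
  | zero => simp
  | succ k =>
    have hreflect :
        t ^ k * ∑ j ∈ range (k + 1), t⁻¹ ^ j = ∑ j ∈ range (k + 1), t ^ j := by
      rw [mul_sum, ← sum_range_reflect (t ^ ·)]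
      refine sum_congr rfl fun j hj => ?_
      have hjk : j ≤ k := Nat.lt_succ_iff.1 (mem_range.1 hj)
      rw [add_tsub_cancel_right, inv_pow, pow_sub₀ t ht hjk]
    rw [add_tsub_cancel_right, mul_assoc, hreflect, mul_neg_geom_sum]

/-- `ψ_n` at the value `v`, in terms of the quantile `t = F v` and the density `p = f v`. -/
noncomputable def virtualValue (n : ℕ) (v t p : ℝ) : ℝ :=
  v * t ^ (n - 1) - (1 - t ^ n) / (n * p)

lemma virtualValue_eq_mul {n : ℕ} {v t p : ℝ} (ht0 : t ≠ 0) (ht1 : t ≠ 1) (hp : p ≠ 0) :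
    virtualValue n v t p =
      t ^ (n - 1) * (v - (∑ j ∈ range n, t⁻¹ ^ j) / (n * (p / (1 - t)))) := by
  have h1t : 1 - t ≠ 0 := sub_ne_zero.2 (Ne.symm ht1)
  rw [virtualValue, one_sub_pow_eq_mul_geom_sum_inv ht0]
  rcases eq_or_ne (n : ℝ) 0 with hn | hn
  · simp [hn, mul_comm]
  · field_simp

lemma virtualValue_le_of_nonneg {n : ℕ} (hn : 0 < n) {y z s t p q : ℝ}
    (hs : 0 < s) (hst : s ≤ t) (ht : t < 1) (hp : 0 < p) (hq : 0 < q) (hyz : y ≤ z)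
    (hhazard : p / (1 - s) ≤ q / (1 - t)) (h0 : 0 ≤ virtualValue n y s p) :
    virtualValue n y s p ≤ virtualValue n z t q := by
  have ht0 : 0 < t := hs.trans_le hst
  rw [virtualValue_eq_mul hs.ne' (by linarith) hp.ne'] at h0 ⊢
  rw [virtualValue_eq_mul ht0.ne' (by linarith) hq.ne']
  have hsum : ∑ j ∈ range n, t⁻¹ ^ j ≤ ∑ j ∈ range n, s⁻¹ ^ j :=
    sum_le_sum fun j _ => pow_le_pow_left₀ (inv_nonneg.2 ht0.le) ((inv_le_inv₀ ht0 hs).2 hst) j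
  have hbracket : y - (∑ j ∈ range n, s⁻¹ ^ j) / (n * (p / (1 - s))) ≤
      z - (∑ j ∈ range n, t⁻¹ ^ j) / (n * (q / (1 - t))) := by
    have hrate : 0 < (n : ℝ) * (p / (1 - s)) := by
      have : 0 < 1 - s := by linarith
      positivity
    have := div_le_div₀ (sum_nonneg fun j _ => pow_nonneg (inv_nonneg.2 hs.le) j) hsum hrate
      (mul_le_mul_of_nonneg_left hhazard (Nat.cast_nonneg n))
    linarith
  exact mul_le_mul (pow_le_pow_left₀ hs.le hst _) hbracket
    (nonneg_of_mul_nonneg_right h0 (pow_pos hs _)) (pow_nonneg ht0.le _)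

lemma exists_eq_Icc_of_isClosed {S : Set ℝ} {a b : ℝ} (hS : IsClosed S)
    (hsub : S ⊆ Set.Icc a b) (hb : b ∈ S)
    (hup : ∀ y ∈ S, ∀ z ∈ Set.Icc a b, y ≤ z → z ∈ S) :
    ∃ r ∈ Set.Icc a b, S = Set.Icc r b := by
  have hbdd : BddBelow S := ⟨a, fun z hz => (hsub hz).1⟩
  have hr : sInf S ∈ S := hS.csInf_mem ⟨b, hb⟩ hbdd
  exact ⟨sInf S, hsub hr, Set.Subset.antisymm (fun z hz => ⟨csInf_le hbdd hz, (hsub hz).2⟩)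
    fun z hz => hup _ hr z ⟨(hsub hr).1.trans hz.1, hz.2⟩ hz.1⟩

lemma monotoneOn_posPart_of_le_of_nonneg {s : Set ℝ} {g : ℝ → ℝ}
    (h : ∀ y ∈ s, ∀ z ∈ s, y ≤ z → 0 ≤ g y → g y ≤ g z) :
    MonotoneOn (fun v => (g v)⁺) s := by
  intro y hy z hz hyz
  dsimp only
  rcases le_total 0 (g y) with h0 | h0
  · rw [posPart_eq_self.2 h0]
    exact (h y hy z hz hyz h0).trans (le_posPart _)
  · rw [posPart_eq_zero.2 h0]
    exact posPart_nonneg _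

lemma intervalIntegral_posPart_mul_eq {φ w : ℝ → ℝ} {a r b : ℝ}
    (har : a ≤ r) (hrb : r ≤ b)
    (hφ : {z ∈ Set.Icc a b | 0 ≤ φ z} = Set.Icc r b)
    (hint : IntervalIntegrable (fun v => (φ v)⁺ * w v) volume a b) :
    ∫ v in a..b, (φ v)⁺ * w v = ∫ v in r..b, φ v * w v := by
  have hleft : ∫ v in a..r, (φ v)⁺ * w v = 0 := by
    rw [intervalIntegral.integral_of_le har, integral_Ioc_eq_integral_Ioo]
    refine setIntegral_eq_zero_of_forall_eq_zero fun v hv => ?_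
    have hvS : v ∉ {z ∈ Set.Icc a b | 0 ≤ φ z} := hφ ▸ fun h => hv.2.not_ge h.1
    rw [posPart_eq_zero.2 (le_of_not_ge fun h => hvS ⟨⟨hv.1.le, hv.2.le.trans hrb⟩, h⟩),
      zero_mul]
  have hright : ∫ v in r..b, (φ v)⁺ * w v = ∫ v in r..b, φ v * w v := by
    refine intervalIntegral.integral_congr fun v hv => ?_
    have hvS : v ∈ {z ∈ Set.Icc a b | 0 ≤ φ z} := hφ ▸ Set.uIcc_of_le hrb ▸ hv
    simp only [posPart_eq_self.2 hvS.2]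
  have hsub : ∀ {c d}, a ≤ c → d ≤ b → c ≤ d → Set.uIcc c d ⊆ Set.uIcc a b :=
    fun hc hd hcd => Set.uIcc_subset_uIcc (Set.mem_uIcc_of_le hc (hcd.trans hd))
      (Set.mem_uIcc_of_le (hc.trans hcd) hd)
  rw [← intervalIntegral.integral_add_adjacent_intervals (hint.mono_set (hsub le_rfl hrb har))
    (hint.mono_set (hsub har le_rfl hrb)), hleft, zero_add, hright]

def highestSet {ι : Type*} (i : ι) : Set (ι → ℝ) :=
  {V | ∀ j, V j ≤ V i}

lemma measurableSet_highestSet {ι : Type*} [Finite ι] (i : ι) :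
    MeasurableSet (highestSet i) := by
  simp only [highestSet, Set.ofPred_forall]
  exact .iInter fun j => measurableSet_le (measurable_pi_apply j) (measurable_pi_apply i)

lemma integral_indicator_highestSet {m : ℕ} (μ : Measure ℝ) [IsFiniteMeasure μ]
    {g : ℝ → ℝ} (hg : Integrable g μ) (i : Fin (m + 1)) :
    ∫ V, (highestSet i).indicator (fun W => g (W i)) V
        ∂(Measure.pi fun _ => μ) =
      ∫ v, g v * (μ (Set.Iic v)).toReal ^ m ∂μ := by
  set e := MeasurableEquiv.piFinSuccAbove (fun _ : Fin (m + 1) => ℝ) i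
  set ν : Measure (Fin m → ℝ) := Measure.pi fun _ => μ
  set T : Set (ℝ × (Fin m → ℝ)) := {p | p.2 ∈ Set.univ.pi fun _ => Set.Iic p.1}
  have hpre : e.symm ⁻¹' highestSet i = T := by
    ext p
    simp [highestSet, e, T, i.forall_iff_succAbove, Pi.le_def]
  have hT : MeasurableSet T := hpre ▸ e.symm.measurable (measurableSet_highestSet i)
  have hcomp : (fun p => (highestSet i).indicator (fun W => g (W i))
      (e.symm p)) = T.indicator fun p => g p.1 := by
    ext p
    have hmem : e.symm p ∈ highestSet i ↔ p ∈ T := by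
      rw [← hpre, Set.mem_preimage]
    by_cases hp : p ∈ T
    · rw [Set.indicator_of_mem (hmem.2 hp), Set.indicator_of_mem hp]
      simp [e]
    · rw [Set.indicator_of_notMem (mt hmem.1 hp), Set.indicator_of_notMem hp]
  rw [← ((measurePreserving_piFinSuccAbove (fun _ => μ) i).symm).integral_comp', hcomp,
    integral_prod _ ((hg.comp_fst ν).indicator hT)]
  refine integral_congr_ae (.of_forall fun v => ?_)
  have hslice : (fun W => T.indicator (fun p => g p.1) (v, W)) =
      (Set.univ.pi fun _ => Set.Iic v).indicator fun _ => g v := rfl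
  dsimp only
  rw [hslice, integral_indicator_const _ (MeasurableSet.univ_pi fun _ => measurableSet_Iic),
    measureReal_def, Measure.pi_pi]
  simp [mul_comm]

lemma sum_mul_le_sum_indicator_highestSet {ι : Type*} [Fintype ι] [Nonempty ι] {s : Set ℝ}
    {g : ℝ → ℝ} (hmono : MonotoneOn (fun v => (g v)⁺) s) {x V : ι → ℝ}
    (hV : ∀ i, V i ∈ s)
    (hx0 : ∀ i, 0 ≤ x i) (hx1 : ∑ i, x i ≤ 1) :
    ∑ i, x i * g (V i) ≤ ∑ i, (highestSet i).indicator (fun W => (g (W i))⁺) V := by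
  obtain ⟨i₀, -, hmax⟩ := exists_max_image univ V univ_nonempty
  have hV₀ : V ∈ highestSet i₀ := fun j => hmax j (mem_univ j)
  calc ∑ i, x i * g (V i)
      ≤ ∑ i, x i * (g (V i₀))⁺ := sum_le_sum fun i _ => mul_le_mul_of_nonneg_left
          ((le_posPart _).trans (hmono (hV i) (hV i₀) (hV₀ i))) (hx0 i)
    _ = (∑ i, x i) * (g (V i₀))⁺ := (sum_mul _ _ _).symm
    _ ≤ (g (V i₀))⁺ := mul_le_of_le_one_left (posPart_nonneg _) hx1
    _ = (highestSet i₀).indicator (fun W => (g (W i₀))⁺) V :=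
          (Set.indicator_of_mem hV₀ (fun W => (g (W i₀))⁺)).symm
    _ ≤ ∑ i, (highestSet i).indicator (fun W => (g (W i))⁺) V :=
          single_le_sum (f := fun i => (highestSet i).indicator
            (fun W => (g (W i))⁺) V) (fun i _ =>
            Set.indicator_nonneg (fun _ _ => posPart_nonneg _) _) (mem_univ i₀)

lemma integral_sum_mul_le_of_sum_le_one {m : ℕ} (μ : Measure ℝ) [IsProbabilityMeasure μ]
    {s : Set ℝ}
    (hs : ∀ᵐ v ∂μ, v ∈ s) {g : ℝ → ℝ} (hg : Integrable g μ)
    (hmono : MonotoneOn (fun v => (g v)⁺) s) (x : (Fin (m + 1) → ℝ) → Fin (m + 1) → ℝ)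
    (hxmeas : ∀ i, Measurable fun V => x V i) (hx01 : ∀ V i, x V i ∈ Set.Icc (0 : ℝ) 1)
    (hxsum : ∀ V, ∑ i, x V i ≤ 1) :
    ∫ V, ∑ i, x V i * g (V i) ∂(Measure.pi fun _ => μ) ≤
      (m + 1) * ∫ v, (g v)⁺ * (μ (Set.Iic v)).toReal ^ m ∂μ := by
  have hgpos : Integrable (fun v => (g v)⁺) μ := hg.pos_part
  have hgi : ∀ i : Fin (m + 1), Integrable (fun V => g (V i)) (Measure.pi fun _ => μ) := fun i =>
    ((measurePreserving_eval _ i).integrable_comp hg.aestronglyMeasurable).2 hg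
  have hterm : ∀ i, Integrable (fun V => x V i * g (V i)) (Measure.pi fun _ => μ) := fun i =>
    (hgi i).bdd_mul (hxmeas i).aestronglyMeasurable (.of_forall fun V => by
      rw [Real.norm_eq_abs, abs_le]
      exact ⟨by linarith [(hx01 V i).1], (hx01 V i).2⟩)
  have hwin : ∀ i, Integrable
      ((highestSet i).indicator fun W => (g (W i))⁺)
      (Measure.pi fun _ => μ) := fun i =>
    (hgi i).pos_part.indicator (measurableSet_highestSet i)
  have hbox : ∀ᵐ V ∂(Measure.pi fun _ => μ), ∀ i : Fin (m + 1), V i ∈ s :=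
    ae_all_iff.2 fun _ => Measure.tendsto_eval_ae_ae.eventually hs
  calc ∫ V, ∑ i, x V i * g (V i) ∂(Measure.pi fun _ => μ)
      ≤ ∫ V, ∑ i : Fin (m + 1), (highestSet i).indicator (fun W => (g (W i))⁺) V
          ∂(Measure.pi fun _ => μ) := by
        refine integral_mono_ae (integrable_finsetSum _ fun i _ => hterm i)
          (integrable_finsetSum _ fun i _ => hwin i) ?_
        filter_upwards [hbox] with V hV
        exact sum_mul_le_sum_indicator_highestSet hmono hV (fun i => (hx01 V i).1) (hxsum V)
    _ = (m + 1) * ∫ v, (g v)⁺ * (μ (Set.Iic v)).toReal ^ m ∂μ := by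
        rw [integral_finsetSum _ fun i _ => hwin i]
        simp only [integral_indicator_highestSet μ hgpos, sum_const, card_univ,
          Fintype.card_fin, nsmul_eq_mul, Nat.cast_add, Nat.cast_one]

noncomputable def densityOn (a b : ℝ) (f : ℝ → ℝ) : Measure ℝ :=
  (volume.restrict (Set.Icc a b)).withDensity fun v => ENNReal.ofReal (f v)

section Distribution

variable {a b : ℝ} {F f : ℝ → ℝ}

lemma ae_mem_densityOn : ∀ᵐ v ∂densityOn a b f, v ∈ Set.Icc a b :=
  (withDensity_absolutelyContinuous _ _).ae_le (ae_restrict_mem measurableSet_Icc)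

lemma densityOn_Iic (hfcont : ContinuousOn f (Set.Icc a b))
    (hfnonneg : ∀ x ∈ Set.Icc a b, 0 ≤ f x)
    (hderiv : ∀ x ∈ Set.Icc a b, HasDerivAt F (f x) x)
    {v : ℝ} (hv : v ∈ Set.Icc a b) :
    densityOn a b f (Set.Iic v) = ENNReal.ofReal (F v - F a) := by
  have hsub : Set.Icc a v ⊆ Set.Icc a b := Set.Icc_subset_Icc le_rfl hv.2
  have hIic : Set.Iic v ∩ Set.Icc a b = Set.Icc a v :=
    Set.ext fun w => ⟨fun h => ⟨h.2.1, h.1⟩, fun h => ⟨h.2, h.1, h.2.trans hv.2⟩⟩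
  have hftc : ∫ w in a..v, f w = F v - F a :=
    intervalIntegral.integral_eq_sub_of_hasDerivAt
      (fun x hx => hderiv x (hsub (Set.uIcc_of_le hv.1 ▸ hx)))
      ((hfcont.mono hsub).intervalIntegrable_of_Icc hv.1)
  rw [densityOn, withDensity_apply _ measurableSet_Iic, Measure.restrict_restrict measurableSet_Iic,
    hIic, ← ofReal_integral_eq_lintegral_ofReal
      ((hfcont.mono hsub).integrableOn_compact isCompact_Icc)
      ((ae_restrict_iff' measurableSet_Icc).2 (.of_forall fun w hw => hfnonneg w (hsub hw))),
    integral_Icc_eq_integral_Ioc, ← intervalIntegral.integral_of_le hv.1, hftc]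

lemma isProbabilityMeasure_densityOn (hab : a ≤ b) (hfcont : ContinuousOn f (Set.Icc a b))
    (hfnonneg : ∀ x ∈ Set.Icc a b, 0 ≤ f x)
    (hderiv : ∀ x ∈ Set.Icc a b, HasDerivAt F (f x) x)
    (hF : F b - F a = 1) :
    IsProbabilityMeasure (densityOn a b f) := by
  constructor
  rw [← measure_congr ((Filter.eventuallyEq_univ (s := Set.Iic b)).2
      (ae_mem_densityOn.mono fun v hv => hv.2)),
    densityOn_Iic hfcont hfnonneg hderiv (Set.right_mem_Icc.2 hab), hF, ENNReal.ofReal_one]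

lemma integral_densityOn (hab : a ≤ b) (hfcont : ContinuousOn f (Set.Icc a b))
    (hfnonneg : ∀ x ∈ Set.Icc a b, 0 ≤ f x) (g : ℝ → ℝ) :
    ∫ v, g v ∂densityOn a b f = ∫ v in a..b, g v * f v := by
  rw [intervalIntegral.integral_of_le hab, ← integral_Icc_eq_integral_Ioc, densityOn,
    show (fun v => ENNReal.ofReal (f v)) = fun v => ((f v).toNNReal : ENNReal) from rfl,
    integral_withDensity_eq_integral_smul₀ (hfcont.aemeasurable measurableSet_Icc).real_toNNReal]
  refine setIntegral_congr_fun measurableSet_Icc fun v hv => ?_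
  rw [NNReal.smul_def, Real.coe_toNNReal _ (hfnonneg v hv), smul_eq_mul, mul_comm]

lemma integrable_densityOn_of_continuousOn [IsFiniteMeasure (densityOn a b f)] {g : ℝ → ℝ}
    (hg : ContinuousOn g (Set.Icc a b)) : Integrable g (densityOn a b f) := by
  rw [← Measure.restrict_eq_self_of_ae_mem ae_mem_densityOn]
  exact hg.integrableOn_compact isCompact_Icc

lemma cdf_nonneg_of_mem (hFmono : StrictMonoOn F (Set.Icc a b)) (hFa : F a = 0) {y : ℝ}
    (hy : y ∈ Set.Icc a b) : 0 ≤ F y :=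
  hFa ▸ hFmono.monotoneOn (Set.left_mem_Icc.2 (hy.1.trans hy.2)) hy hy.1

lemma cdf_pos_of_mem (hFmono : StrictMonoOn F (Set.Icc a b)) (hFa : F a = 0) {y : ℝ}
    (hy : y ∈ Set.Icc a b) (hay : a < y) : 0 < F y :=
  hFa ▸ hFmono (Set.left_mem_Icc.2 (hy.1.trans hy.2)) hy hay

lemma cdf_le_one_of_mem (hFmono : StrictMonoOn F (Set.Icc a b)) (hFb : F b = 1) {y : ℝ}
    (hy : y ∈ Set.Icc a b) : F y ≤ 1 :=
  hFb ▸ hFmono.monotoneOn hy (Set.right_mem_Icc.2 (hy.1.trans hy.2)) hy.2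

lemma cdf_lt_one_of_mem (hFmono : StrictMonoOn F (Set.Icc a b)) (hFb : F b = 1) {y : ℝ}
    (hy : y ∈ Set.Icc a b) (hyb : y < b) : F y < 1 :=
  hFb ▸ hFmono hy (Set.right_mem_Icc.2 (hy.1.trans hy.2)) hyb

lemma integral_posPart_mul_cdf_pow (hab : a ≤ b) (hFmono : StrictMonoOn F (Set.Icc a b))
    (hFa : F a = 0) (hfcont : ContinuousOn f (Set.Icc a b))
    (hfnonneg : ∀ x ∈ Set.Icc a b, 0 ≤ f x)
    (hderiv : ∀ x ∈ Set.Icc a b, HasDerivAt F (f x) x)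
    {g : ℝ → ℝ} (hg : ContinuousOn g (Set.Icc a b)) {r : ℝ} (hr : r ∈ Set.Icc a b)
    (hgr : {z ∈ Set.Icc a b | 0 ≤ g z} = Set.Icc r b) (m : ℕ) :
    ∫ v, (g v)⁺ * (densityOn a b f (Set.Iic v)).toReal ^ m ∂densityOn a b f =
      ∫ v in r..b, g v * F v ^ m * f v := by
  have hcdf : ∀ᵐ v ∂densityOn a b f,
      (g v)⁺ * (densityOn a b f (Set.Iic v)).toReal ^ m = (g v)⁺ * F v ^ m :=
    ae_mem_densityOn.mono fun v hv => by
      rw [densityOn_Iic hfcont hfnonneg hderiv hv, hFa, sub_zero,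
        ENNReal.toReal_ofReal (cdf_nonneg_of_mem hFmono hFa hv)]
  have hFcont : ContinuousOn F (Set.Icc a b) :=
    continuousOn_of_forall_continuousAt fun x hx => (hderiv x hx).continuousAt
  have hcont : ContinuousOn (fun v => (g v)⁺ * (F v ^ m * f v)) (Set.Icc a b) :=
    (hg.sup continuousOn_const).mul ((hFcont.pow m).mul hfcont)
  simp_rw [integral_congr_ae hcdf, integral_densityOn hab hfcont hfnonneg, mul_assoc]
  exact intervalIntegral_posPart_mul_eq hr.1 hr.2 hgr (hcont.intervalIntegrable_of_Icc hab)

variable {n : ℕ}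

lemma virtualValue_cdf_le_of_nonneg (hn : 2 ≤ n) (ha : 0 ≤ a)
    (hFmono : StrictMonoOn F (Set.Icc a b)) (hFa : F a = 0) (hFb : F b = 1)
    (hfpos : ∀ x ∈ Set.Icc a b, 0 < f x)
    (hMHR : MonotoneOn (fun z => f z / (1 - F z)) (Set.Ico a b))
    {y z : ℝ} (hy : y ∈ Set.Icc a b) (hz : z ∈ Set.Icc a b) (hyz : y ≤ z)
    (h0 : 0 ≤ virtualValue n y (F y) (f y)) :
    virtualValue n y (F y) (f y) ≤ virtualValue n z (F z) (f z) := by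
  have hn0 : (0 : ℝ) < n := by positivity
  have hay : a < y := by
    refine hy.1.lt_of_ne fun hya => ?_
    have := hfpos a (hya ▸ hy)
    have : 0 < 1 / (n * f a) := by positivity
    rw [← hya, virtualValue, hFa, zero_pow (by omega), zero_pow (by omega)] at h0
    linarith
  rcases hz.2.eq_or_lt with hzb | hzb
  · have hF0 := cdf_nonneg_of_mem hFmono hFa hy
    have hF1 := cdf_le_one_of_mem hFmono hFb hy
    have := hfpos y hy
    have hdrop : 0 ≤ (1 - F y ^ n) / (n * f y) :=
      div_nonneg (sub_nonneg.2 (pow_le_one₀ hF0 hF1)) (by positivity)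
    have hpow : F y ^ (n - 1) ≤ 1 := pow_le_one₀ hF0 hF1
    rw [hzb, virtualValue, virtualValue, hFb]
    simp only [one_pow, sub_self, zero_div, mul_one, sub_zero]
    nlinarith [ha.trans hy.1, hy.2]
  · exact virtualValue_le_of_nonneg (by omega) (cdf_pos_of_mem hFmono hFa hy hay)
      (hFmono.monotoneOn hy hz hyz) (cdf_lt_one_of_mem hFmono hFb hz hzb) (hfpos y hy)
      (hfpos z hz) hyz (hMHR ⟨hy.1, hyz.trans_lt hzb⟩ ⟨hz.1, hzb⟩ hyz) h0

lemma continuousOn_virtualValue (hn : 0 < n) (hFcont : ContinuousOn F (Set.Icc a b))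
    (hfcont : ContinuousOn f (Set.Icc a b)) (hfpos : ∀ x ∈ Set.Icc a b, 0 < f x) :
    ContinuousOn (fun v => virtualValue n v (F v) (f v)) (Set.Icc a b) := by
  refine (continuousOn_id.mul (hFcont.pow _)).sub ((continuousOn_const.sub (hFcont.pow _)).div
    (continuousOn_const.mul hfcont) fun v hv => ?_)
  have := hfpos v hv
  positivity

lemma exists_virtualValue_nonneg_eq_Icc (hn : 2 ≤ n) (hab : a < b) (ha : 0 ≤ a)
    (hFmono : StrictMonoOn F (Set.Icc a b)) (hFa : F a = 0) (hFb : F b = 1)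
    (hFcont : ContinuousOn F (Set.Icc a b)) (hfcont : ContinuousOn f (Set.Icc a b))
    (hfpos : ∀ x ∈ Set.Icc a b, 0 < f x)
    (hMHR : MonotoneOn (fun z => f z / (1 - F z)) (Set.Ico a b)) :
    ∃ r ∈ Set.Icc a b,
      {z ∈ Set.Icc a b | 0 ≤ virtualValue n z (F z) (f z)} = Set.Icc r b := by
  have hb : 0 ≤ virtualValue n b (F b) (f b) := by simp [virtualValue, hFb, ha.trans hab.le]
  exact exists_eq_Icc_of_isClosed
    ((continuousOn_virtualValue (by omega) hFcont hfcont hfpos).preimage_isClosed_of_isClosed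
      isClosed_Icc isClosed_Ici) (Set.sep_subset _ _) ⟨Set.right_mem_Icc.2 hab.le, hb⟩
    fun y hy z hz hyz => ⟨hz, hy.2.trans
      (virtualValue_cdf_le_of_nonneg hn ha hFmono hFa hFb hfpos hMHR hy.1 hz hyz hy.2)⟩

end Distribution

theorem mhr_optimal_is_reserve_auction_general
    (n : ℕ) (hn : 2 ≤ n) (a b : ℝ) (hab : a < b) (ha : 0 ≤ a)
    (F f : ℝ → ℝ)
    (hFmono : StrictMonoOn F (Set.Icc a b))
    (hFa : F a = 0) (hFb : F b = 1)
    (hfcont : ContinuousOn f (Set.Icc a b))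
    (hfpos : ∀ x ∈ Set.Icc a b, 0 < f x)
    (hderiv : ∀ x ∈ Set.Icc a b, HasDerivAt F (f x) x)
    (ψ : ℝ → ℝ)
    (hψ : ∀ v, ψ v = v * F v ^ (n - 1) - (1 - F v ^ n) / (n * f v))
    (hMHR : MonotoneOn (fun z => f z / (1 - F z)) (Set.Ico a b))
    (μ : Measure ℝ)
    (hμ : μ = (volume.restrict (Set.Icc a b)).withDensity
      (fun v => ENNReal.ofReal (f v))) :
    ∃ r ∈ Set.Icc a b,
      {z ∈ Set.Icc a b | 0 ≤ ψ z} = Set.Icc r b ∧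
      ∀ x : (Fin n → ℝ) → Fin n → ℝ,
        (∀ i, Measurable (fun v => x v i)) →
        (∀ v i, x v i ∈ Set.Icc (0 : ℝ) 1) →
        (∀ v, ∑ i, x v i ≤ 1) →
        ∫ V, (∑ i, x V i * ψ (V i)) ∂(Measure.pi fun _ : Fin n => μ) ≤
          (n : ℝ) * ∫ v in r..b, ψ v * F v ^ (n - 1) * f v := by
  obtain rfl : ψ = fun v => virtualValue n v (F v) (f v) := funext hψ
  obtain rfl : μ = densityOn a b f := hμ
  have hFcont : ContinuousOn F (Set.Icc a b) :=
    continuousOn_of_forall_continuousAt fun x hx => (hderiv x hx).continuousAt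
  obtain ⟨r, hr, hS⟩ :=
    exists_virtualValue_nonneg_eq_Icc hn hab ha hFmono hFa hFb hFcont hfcont hfpos hMHR
  refine ⟨r, hr, hS, fun x hxmeas hx01 hxsum => ?_⟩
  obtain ⟨m, rfl⟩ : ∃ m, n = m + 1 := ⟨n - 1, by omega⟩
  have hfnonneg : ∀ x ∈ Set.Icc a b, 0 ≤ f x := fun x hx => (hfpos x hx).le
  have hψcont := continuousOn_virtualValue (n := m + 1) m.succ_pos hFcont hfcont hfpos
  have := isProbabilityMeasure_densityOn hab.le hfcont hfnonneg hderiv (by rw [hFa, hFb, sub_zero])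
  calc _ ≤ _ := integral_sum_mul_le_of_sum_le_one _ ae_mem_densityOn
          (integrable_densityOn_of_continuousOn hψcont)
          (monotoneOn_posPart_of_le_of_nonneg fun y hy z hz =>
            virtualValue_cdf_le_of_nonneg hn ha hFmono hFa hFb hfpos hMHR hy hz) x hxmeas hx01 hxsum
    _ = _ := by
      rw [integral_posPart_mul_cdf_pow hab.le hFmono hFa hfcont hfnonneg hderiv hψcont hr hS]
      push_cast
      rfl

/-- **For MHR distributions the optimal all-pay auction is highest-bid-wins
with a reserve price.**  `n ≥ 2` agents have values drawn i.i.d. from the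
distribution `μ` on `[a, b]` (with `0 ≤ a`) with continuous density `f` and
cdf `F` (continuous, strictly increasing, `F a = 0`, `F b = 1`, `f` positive
on `[a,b]`).  If the hazard rate `h(z) = f z / (1 - F z)` is nondecreasing on
`[a, b)`, then the set `{ z ∈ [a,b] | ψ_n z ≥ 0 }` is an interval `[r, b]`,
where `ψ_n(z) = z * F z ^ (n-1) - (1 - F z ^ n)/(n * f z)`, and every
measurable allocation rule `x : [a,b]^n → [0,1]^n` with `∑ i, x v i ≤ 1` has
expected virtual surplus at most
`n * ∫ v in r..b, ψ_n v * F v ^ (n-1) * f v`. -/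
theorem mhr_optimal_is_reserve_auction
    (n : ℕ) (hn : 2 ≤ n) (a b : ℝ) (hab : a < b) (ha : 0 ≤ a)
    (F f : ℝ → ℝ)
    (hFcont : Continuous F)
    (hFmono : StrictMonoOn F (Set.Icc a b))
    (hFa : F a = 0) (hFb : F b = 1)
    (hfmeas : Measurable f)
    (hfcont : ContinuousOn f (Set.Icc a b))
    (hfpos : ∀ x ∈ Set.Icc a b, 0 < f x)
    (hderiv : ∀ x ∈ Set.Icc a b, HasDerivAt F (f x) x)
    (ψ : ℝ → ℝ)
    (hψ : ∀ v, ψ v = v * F v ^ (n - 1) - (1 - F v ^ n) / (n * f v))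
    (hMHR : MonotoneOn (fun z => f z / (1 - F z)) (Set.Ico a b))
    (μ : Measure ℝ)
    (hμ : μ = (volume.restrict (Set.Icc a b)).withDensity
      (fun v => ENNReal.ofReal (f v))) :
    ∃ r ∈ Set.Icc a b,
      {z ∈ Set.Icc a b | 0 ≤ ψ z} = Set.Icc r b ∧
      ∀ x : (Fin n → ℝ) → Fin n → ℝ,
        (∀ i, Measurable (fun v => x v i)) →
        (∀ v i, x v i ∈ Set.Icc (0 : ℝ) 1) →
        (∀ v, ∑ i, x v i ≤ 1) →
        ∫ V, (∑ i, x V i * ψ (V i)) ∂(Measure.pi fun _ : Fin n => μ) ≤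
          (n : ℝ) * ∫ v in r..b, ψ v * F v ^ (n - 1) * f v :=
  mhr_optimal_is_reserve_auction_general n hn a b hab ha F f hFmono hFa hFb hfcont hfpos hderiv ψ hψ
    hMHR μ hμ
end

section
/- Suppose the distribution is regular, i.e., φ is nondecreasing on [a,b], and let r* ∈ [a,b] satisfy φ(r*) = 0. Then the highest-bid-wins all-pay auction with reserve value r* achieves expected maximum payment at least half the optimal auction revenue: n·∫_a^b b_{r*}(v)·F(v)^{n-1}·f(v) dv ≥ (1/2)·n·∫_a^b max(φ(v), 0)·F(v)^{n-1}·f(v) dv. (For regular i.i.d. distributions, a highest-bid-wins all-pay auction with an appropriate reserve achieves approximation ratio at most 2 against optimal procurement.) -/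
/-!
Below `r*` both integrands vanish: the bid is zero there, and regularity gives `φ ≤ 0`. On
`[r*, b]`, integrating by parts against powers of `F` gives, with `P k = ∫_{r*}^b F^k` and
`q = F r*`,
`(2n-1) · AllPay = n (b - r* q^(2n-1)) - (2n-1) P (n-1) + (n-1) P (2n-1)` and
`OPT = b - r* q^n - n P (n-1) + (n-1) P n`.
Hence `2(2n-1) (AllPay - OPT/2)` is the sum of an interior term `∫_{r*}^b h(F v) dv` and a reserve
term `r* · H(q)` for two polynomials `h`, `H` that are nonnegative on `[0, 1]`; the reserve term
is nonnegative because `r* = (1 - F r*) / f r* ≥ 0`.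
-/

open MeasureTheory intervalIntegral Set

lemma natCast_mul_pow_mul_one_sub_le_one_sub_pow {u : ℝ} (h0 : 0 ≤ u) (h1 : u ≤ 1) (k : ℕ) :
    k * u ^ k * (1 - u) ≤ 1 - u ^ k := by
  rw [← geom_sum_mul_of_le_one h1 k]
  refine mul_le_mul_of_nonneg_right ?_ (sub_nonneg.2 h1)
  calc (k : ℝ) * u ^ k = ∑ _i ∈ Finset.range k, u ^ k := by simp
    _ ≤ ∑ i ∈ Finset.range k, u ^ i :=
      Finset.sum_le_sum fun i hi => pow_le_pow_of_le_one h0 h1 (Finset.mem_range.1 hi).le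

lemma one_sub_pow_le_natCast_mul_one_sub {u : ℝ} (hu : -1 ≤ u) (k : ℕ) :
    1 - u ^ k ≤ k * (1 - u) := by
  have := one_add_mul_le_pow (a := u - 1) (by linarith) k
  rw [add_sub_cancel] at this
  linarith

lemma reserve_poly_nonneg (n : ℕ) {t : ℝ} (h0 : 0 ≤ t) (h1 : t ≤ 1) :
    0 ≤ 1 + (2 * n - 1) * t ^ n - 2 * n * t ^ (2 * n - 1) := by
  have h2 : t ^ (2 * n - 1) ≤ t ^ n := pow_le_pow_of_le_one h0 h1 (by omega)
  have h3 : t ^ n ≤ 1 := pow_le_one₀ h0 h1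
  nlinarith [mul_le_mul_of_nonneg_left h2 (Nat.cast_nonneg (α := ℝ) n)]

lemma interior_poly_nonneg {n : ℕ} (hn : 1 ≤ n) {u : ℝ} (h0 : 0 ≤ u) (h1 : u ≤ 1) :
    0 ≤ 1 + (2 * n - 1) * (n - 2) * u ^ (n - 1) - (2 * n - 1) * (n - 1) * u ^ n
      + 2 * (n - 1) * u ^ (2 * n - 1) := by
  obtain ⟨m, rfl⟩ : ∃ m, n = m + 1 := ⟨n - 1, by omega⟩
  have hlow := natCast_mul_pow_mul_one_sub_le_one_sub_pow h0 h1 m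
  have hup := one_sub_pow_le_natCast_mul_one_sub (by linarith : -1 ≤ u) (m + 1)
  rw [Nat.add_sub_cancel, show 2 * (m + 1) - 1 = 2 * m + 1 by omega]
  push_cast at hup ⊢
  have key : 1 + (2 * (m + 1) - 1) * ((m : ℝ) + 1 - 2) * u ^ m
      - (2 * (m + 1) - 1) * ((m : ℝ) + 1 - 1) * u ^ (m + 1)
      + 2 * ((m : ℝ) + 1 - 1) * u ^ (2 * m + 1)
      = (1 - u ^ m - m * u ^ m * (1 - u))
        + 2 * (m * u ^ m) * ((m + 1) * (1 - u) - (1 - u ^ (m + 1))) := by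
    ring
  rw [key]
  exact add_nonneg (by linarith) (mul_nonneg (by positivity) (by linarith))

theorem integral_eq_integral_of_eqOn_Ioo_zero {g : ℝ → ℝ} {a r b : ℝ} (har : a ≤ r)
    (hg : EqOn g 0 (Ioo a r)) : ∫ x in a..b, g x = ∫ x in r..b, g x := by
  have hint : IntervalIntegrable g volume a r := by
    rw [intervalIntegrable_iff_integrableOn_Ioo_of_le har]
    exact integrableOn_zero.congr_fun hg.symm measurableSet_Ioo
  have hzero : ∫ x in a..r, g x = 0 := by
    rw [integral_of_le har, integral_Ioc_eq_integral_Ioo,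
      setIntegral_congr_fun measurableSet_Ioo hg]
    simp
  by_cases hrb : IntervalIntegrable g volume r b
  · rw [← integral_add_adjacent_intervals hint hrb, hzero, zero_add]
  · rw [integral_undef hrb, integral_undef fun hab => hrb (hint.symm.trans hab)]

theorem hasDerivAt_mul_sub_integral {G : ℝ → ℝ} {g x : ℝ} (hG : Continuous G)
    (hGx : HasDerivAt G g x) (r : ℝ) :
    HasDerivAt (fun v => v * G v - ∫ z in r..v, G z) (x * g) x := by
  refine (((hasDerivAt_id' x).mul hGx).sub
    (hG.integral_hasStrictDerivAt r x).hasDerivAt).congr_deriv ?_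
  ring

section Revenue

variable {F f : ℝ → ℝ} {r b : ℝ}

theorem intervalIntegrable_of_hasDerivAt_of_nonneg (hrb : r ≤ b)
    (hF : ∀ x ∈ Icc r b, HasDerivAt F (f x) x) (hf : ∀ x ∈ Icc r b, 0 ≤ f x) :
    IntervalIntegrable f volume r b := by
  refine intervalIntegrable_deriv_of_nonneg (g := F) ?_ ?_ ?_ <;>
    simp only [uIcc_of_le hrb, min_eq_left hrb, max_eq_right hrb]
  · exact fun x hx => (hF x hx).continuousAt.continuousWithinAt
  · exact fun x hx => hF x (Ioo_subset_Icc_self hx)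
  · exact fun x hx => hf x (Ioo_subset_Icc_self hx)

theorem natCast_mul_integral_mul_pow_mul_deriv (hrb : r ≤ b) (hFc : Continuous F)
    (hF : ∀ x ∈ Icc r b, HasDerivAt F (f x) x) (hf : IntervalIntegrable f volume r b)
    (m : ℕ) :
    m * ∫ v in r..b, v * (F v ^ (m - 1) * f v)
      = b * F b ^ m - r * F r ^ m - ∫ v in r..b, F v ^ m := by
  have ibp := integral_mul_deriv_eq_deriv_mul (u := id) (u' := fun _ => 1)
    (v := fun v => F v ^ m) (v' := fun v => m * F v ^ (m - 1) * f v)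
    (fun x _ => hasDerivAt_id x) (fun x hx => (hF x (by rwa [uIcc_of_le hrb] at hx)).pow m)
    intervalIntegrable_const (hf.continuousOn_mul (by fun_prop))
  simp only [id, one_mul] at ibp
  rw [← ibp, ← intervalIntegral.integral_const_mul]
  exact integral_congr fun v _ => by ring

theorem integral_allPayBid_mul_eq {n : ℕ} (hn : 2 ≤ n) (hrb : r ≤ b) (hFc : Continuous F)
    (hF : ∀ x ∈ Icc r b, HasDerivAt F (f x) x) (hf : IntervalIntegrable f volume r b)
    (hFb : F b = 1) :
    (2 * n - 1) * (n * ∫ v in r..b,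
        (v * F v ^ (n - 1) - ∫ z in r..v, F z ^ (n - 1)) * F v ^ (n - 1) * f v)
      = n * (b - r * F r ^ (2 * n - 1)) - (2 * n - 1) * (∫ v in r..b, F v ^ (n - 1))
        + (n - 1) * ∫ v in r..b, F v ^ (2 * n - 1) := by
  have hF' : ∀ x ∈ uIcc r b, HasDerivAt F (f x) x := fun x hx =>
    hF x (by rwa [uIcc_of_le hrb] at hx)
  have hu' : IntervalIntegrable (fun x => x * ((n - 1 : ℕ) * F x ^ (n - 1 - 1) * f x))
      volume r b := by
    simpa only [mul_assoc] using
      hf.continuousOn_mul (g := fun x => x * ((n - 1 : ℕ) * F x ^ (n - 1 - 1))) (by fun_prop)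
  -- The bid has derivative `v · (F^(n-1))'`, so integrating by parts against `F^n` leaves
  -- `(n-1) ∫ v F^(2n-2) f`, which `natCast_mul_integral_mul_pow_mul_deriv` evaluates.
  have ibp := integral_mul_deriv_eq_deriv_mul (v := fun y => F y ^ n)
    (fun x hx => hasDerivAt_mul_sub_integral (G := fun v => F v ^ (n - 1)) (hFc.pow (n - 1))
      ((hF' x hx).pow (n - 1)) r)
    (fun x hx => (hF' x hx).pow n) hu' (hf.continuousOn_mul (by fun_prop))
  have hpow : ∀ y : ℝ, y ^ (n - 1 - 1) * y ^ n = y ^ (2 * n - 1 - 1) := fun y => by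
    rw [← pow_add]; congr 1; omega
  have hpay : ∫ v in r..b,
        (v * F v ^ (n - 1) - ∫ z in r..v, F z ^ (n - 1)) * (n * F v ^ (n - 1) * f v)
      = n * ∫ v in r..b,
        (v * F v ^ (n - 1) - ∫ z in r..v, F z ^ (n - 1)) * F v ^ (n - 1) * f v := by
    rw [← intervalIntegral.integral_const_mul]
    exact integral_congr fun v _ => by ring
  have hrest : ∫ v in r..b, v * ((n - 1 : ℕ) * F v ^ (n - 1 - 1) * f v) * F v ^ n
      = (n - 1 : ℕ) * ∫ v in r..b, v * (F v ^ (2 * n - 1 - 1) * f v) := by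
    rw [← intervalIntegral.integral_const_mul]
    exact integral_congr fun v _ => by rw [← hpow]; ring
  have hend : ∀ y : ℝ, y ^ (n - 1) * y ^ n = y ^ (2 * n - 1) := fun y => by
    rw [← pow_add]; congr 1; omega
  have hK := natCast_mul_integral_mul_pow_mul_deriv hrb hFc hF hf (2 * n - 1)
  rw [hpay, hrest, integral_same, hFb] at ibp
  rw [hFb] at hK
  push_cast [Nat.cast_sub (by omega : 1 ≤ n), Nat.cast_sub (by omega : 1 ≤ 2 * n)] at ibp hK
  simp only [one_pow, mul_one, sub_zero] at ibp hK
  linear_combination (2 * (n : ℝ) - 1) * ibp - ((n : ℝ) - 1) * hK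
    + (1 - 2 * (n : ℝ)) * r * hend (F r)

theorem integral_virtualValue_mul_eq {n : ℕ} (hn : 1 ≤ n) (hrb : r ≤ b) (hFc : Continuous F)
    (hF : ∀ x ∈ Icc r b, HasDerivAt F (f x) x) (hf : IntervalIntegrable f volume r b)
    (hf0 : ∀ x ∈ Icc r b, f x ≠ 0) (hFb : F b = 1) :
    n * ∫ v in r..b, (v - (1 - F v) / f v) * F v ^ (n - 1) * f v
      = b - r * F r ^ n - n * (∫ v in r..b, F v ^ (n - 1))
        + (n - 1) * ∫ v in r..b, F v ^ n := by
  have hpoint : ∫ v in r..b, (v - (1 - F v) / f v) * F v ^ (n - 1) * f v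
      = ∫ v in r..b, (v * (F v ^ (n - 1) * f v) - (F v ^ (n - 1) - F v ^ n)) := by
    refine integral_congr fun v hv => ?_
    rw [uIcc_of_le hrb] at hv
    have hFn : F v ^ n = F v ^ (n - 1) * F v := by rw [← pow_succ]; congr 1; omega
    simp only [hFn]
    field_simp [hf0 v hv]
  have hK := natCast_mul_integral_mul_pow_mul_deriv hrb hFc hF hf n
  have hK1 : IntervalIntegrable (fun v => v * (F v ^ (n - 1) * f v)) volume r b := by
    simpa only [mul_assoc] using
      hf.continuousOn_mul (g := fun v => v * F v ^ (n - 1)) (by fun_prop)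
  rw [hpoint, intervalIntegral.integral_sub hK1 (Continuous.intervalIntegrable (by fun_prop) _ _),
    intervalIntegral.integral_sub (Continuous.intervalIntegrable (by fun_prop) _ _)
      (Continuous.intervalIntegrable (by fun_prop) _ _)]
  rw [hFb, one_pow, mul_one] at hK
  linear_combination hK

theorem interior_integral_nonneg {n : ℕ} (hn : 1 ≤ n) (hrb : r ≤ b) (hFc : Continuous F)
    (hF01 : MapsTo F (Icc r b) (Icc 0 1)) :
    0 ≤ (b - r) + (2 * n - 1) * (n - 2) * (∫ v in r..b, F v ^ (n - 1))
      - (2 * n - 1) * (n - 1) * (∫ v in r..b, F v ^ n)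
      + 2 * (n - 1) * ∫ v in r..b, F v ^ (2 * n - 1) := by
  have h := integral_nonneg (μ := volume) hrb fun u hu =>
    interior_poly_nonneg hn (hF01 hu).1 (hF01 hu).2
  rwa [intervalIntegral.integral_add, intervalIntegral.integral_sub, intervalIntegral.integral_add,
    intervalIntegral.integral_const, intervalIntegral.integral_const_mul,
    intervalIntegral.integral_const_mul, intervalIntegral.integral_const_mul, smul_eq_mul,
    mul_one] at h
  all_goals exact Continuous.intervalIntegrable (by fun_prop) _ _

theorem integral_allPayBid_mul_ge_half_integral_virtualValue_mul {n : ℕ} (hn : 2 ≤ n)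
    (hrb : r ≤ b) (hr0 : 0 ≤ r) (hFc : Continuous F) (hF01 : MapsTo F (Icc r b) (Icc 0 1))
    (hFb : F b = 1) (hF : ∀ x ∈ Icc r b, HasDerivAt F (f x) x)
    (hfpos : ∀ x ∈ Icc r b, 0 < f x) :
    n * ∫ v in r..b, (v * F v ^ (n - 1) - ∫ z in r..v, F z ^ (n - 1)) * F v ^ (n - 1) * f v ≥
      1 / 2 * (n * ∫ v in r..b, (v - (1 - F v) / f v) * F v ^ (n - 1) * f v) := by
  have hf := intervalIntegrable_of_hasDerivAt_of_nonneg hrb hF fun x hx => (hfpos x hx).le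
  have hpay := integral_allPayBid_mul_eq hn hrb hFc hF hf hFb
  have hopt := integral_virtualValue_mul_eq (by omega : 1 ≤ n) hrb hFc hF hf
    (fun x hx => (hfpos x hx).ne') hFb
  have hinterior := interior_integral_nonneg (by omega : 1 ≤ n) hrb hFc hF01
  have hreserve := mul_nonneg hr0
    (reserve_poly_nonneg n (hF01 ⟨le_rfl, hrb⟩).1 (hF01 ⟨le_rfl, hrb⟩).2)
  have h2n : (0 : ℝ) < 2 * n - 1 := by
    have : (2 : ℝ) ≤ n := by exact_mod_cast hn
    linarith
  rw [ge_iff_le]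
  refine le_of_mul_le_mul_left ?_ h2n
  linear_combination (2 * n - 1) / 2 * hopt - hpay + 1 / 2 * hinterior + 1 / 2 * hreserve

end Revenue

theorem regular_reserve_allpay_two_approx_general
    (n : ℕ) (hn : 2 ≤ n) (a b : ℝ)
    (F f : ℝ → ℝ)
    (hFcont : Continuous F)
    (hFmono : StrictMonoOn F (Set.Icc a b))
    (hFa : F a = 0) (hFb : F b = 1)
    (hfpos : ∀ x ∈ Set.Icc a b, 0 < f x)
    (hderiv : ∀ x ∈ Set.Icc a b, HasDerivAt F (f x) x)
    (φ : ℝ → ℝ)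
    (hφ : ∀ v, φ v = v - (1 - F v) / f v)
    (hreg : MonotoneOn φ (Set.Icc a b))
    (rstar : ℝ) (hrstar : rstar ∈ Set.Icc a b) (hmono_price : φ rstar = 0)
    (bid : ℝ → ℝ)
    (hbid : ∀ v, bid v =
      if rstar ≤ v then v * F v ^ (n - 1) - ∫ z in rstar..v, F z ^ (n - 1)
      else 0) :
    (n : ℝ) * ∫ v in a..b, bid v * F v ^ (n - 1) * f v ≥
      (1 / 2) * ((n : ℝ) * ∫ v in a..b, max (φ v) 0 * F v ^ (n - 1) * f v) := by
  obtain ⟨har, hrb⟩ := hrstar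
  have hsub : Icc rstar b ⊆ Icc a b := Icc_subset_Icc_left har
  have hF01 : MapsTo F (Icc a b) (Icc 0 1) := hFa ▸ hFb ▸ hFmono.monotoneOn.mapsTo_Icc
  have hr0 : 0 ≤ rstar := by
    have hr := hφ rstar
    have := div_nonneg (sub_nonneg.2 (hF01 ⟨har, hrb⟩).2) (hfpos rstar ⟨har, hrb⟩).le
    linarith
  have hpay : ∫ v in a..b, bid v * F v ^ (n - 1) * f v = ∫ v in rstar..b,
      (v * F v ^ (n - 1) - ∫ z in rstar..v, F z ^ (n - 1)) * F v ^ (n - 1) * f v := by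
    rw [integral_eq_integral_of_eqOn_Ioo_zero har fun v hv => by simp [hbid, hv.2]]
    exact integral_congr fun v hv => by simp [hbid, (uIcc_of_le hrb ▸ hv).1]
  have hopt : ∫ v in a..b, max (φ v) 0 * F v ^ (n - 1) * f v
      = ∫ v in rstar..b, (v - (1 - F v) / f v) * F v ^ (n - 1) * f v := by
    have hφneg : ∀ v ∈ Ioo a rstar, φ v ≤ 0 := fun v hv =>
      hmono_price ▸ hreg ⟨hv.1.le, hv.2.le.trans hrb⟩ ⟨har, hrb⟩ hv.2.le
    have hφpos : ∀ v ∈ Icc rstar b, 0 ≤ φ v := fun v hv =>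
      hmono_price ▸ hreg ⟨har, hrb⟩ (hsub hv) hv.1
    rw [integral_eq_integral_of_eqOn_Ioo_zero har fun v hv => by simp [hφneg v hv]]
    exact integral_congr fun v hv => by
      rw [max_eq_left (hφpos v (uIcc_of_le hrb ▸ hv)), hφ]
  rw [hpay, hopt]
  exact integral_allPayBid_mul_ge_half_integral_virtualValue_mul hn hrb hr0 hFcont
    (hF01.mono_left hsub) hFb (fun x hx => hderiv x (hsub hx)) fun x hx => hfpos x (hsub hx)

/-- **For regular distributions, a reserve-price all-pay auction is a
2-approximation to optimal procurement.**  `n ≥ 2` agents have values drawn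
i.i.d. from a distribution with continuous, strictly increasing cdf `F`,
density `f` positive on the support `[a,b]`, `F a = 0`, `F b = 1`.  Suppose
the virtual value for revenue `φ(z) = z - (1 - F z)/(f z)` is nondecreasing on
`[a, b]` and `φ r* = 0` for some `r* ∈ [a,b]`.  Then the highest-bid-wins
all-pay auction with reserve value `r*`, whose equilibrium bid function is
`bid v = v * F v ^ (n-1) - ∫ z in r*..v, F z ^ (n-1)` for `v ≥ r*` and `0`
otherwise, achieves expected maximum payment at least half of the optimal
auction revenue `n * ∫ v in a..b, max (φ v) 0 * F v ^ (n-1) * f v`. -/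
theorem regular_reserve_allpay_two_approx
    (n : ℕ) (hn : 2 ≤ n) (a b : ℝ) (hab : a < b)
    (F f : ℝ → ℝ)
    (hFcont : Continuous F)
    (hFmono : StrictMonoOn F (Set.Icc a b))
    (hFa : F a = 0) (hFb : F b = 1)
    (hfpos : ∀ x ∈ Set.Icc a b, 0 < f x)
    (hderiv : ∀ x ∈ Set.Icc a b, HasDerivAt F (f x) x)
    (φ : ℝ → ℝ)
    (hφ : ∀ v, φ v = v - (1 - F v) / f v)
    (hreg : MonotoneOn φ (Set.Icc a b))
    (rstar : ℝ) (hrstar : rstar ∈ Set.Icc a b) (hmono_price : φ rstar = 0)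
    (bid : ℝ → ℝ)
    (hbid : ∀ v, bid v =
      if rstar ≤ v then v * F v ^ (n - 1) - ∫ z in rstar..v, F z ^ (n - 1)
      else 0) :
    (n : ℝ) * ∫ v in a..b, bid v * F v ^ (n - 1) * f v ≥
      (1 / 2) * ((n : ℝ) * ∫ v in a..b, max (φ v) 0 * F v ^ (n - 1) * f v) :=
  regular_reserve_allpay_two_approx_general n hn a b F f hFcont hFmono hFa hFb hfpos hderiv φ hφ
    hreg rstar hrstar hmono_price bid hbid
end

section
/- For the uniform distribution on [0,1] (F(v) = v, f(v) = 1) and n ≥ 2 agents, the highest-bid-wins all-pay auction with no reserve has equilibrium bid function b_0(v) = v·F(v)^{n-1} − ∫_0^v F(z)^{n-1} dz = ((n−1)/n)·v^n; its expected revenue is n·∫_0^1 b_0(v) dv = (n−1)/(n+1) and its expected maximum payment is n·∫_0^1 b_0(v)·v^{n-1} dv = (n−1)/(2n); hence the ratio of expected revenue to expected maximum payment equals 2n/(n+1), which tends to 2 as n → ∞ (so the utilization-ratio bound of 2 is tight). -/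
open MeasureTheory intervalIntegral Filter

/-! Everything reduces to `∫ z in 0..v, z ^ (k - 1) = v ^ k / k`: the bid is `v ^ n - v ^ n / n`,
and revenue and maximum payment are `(n - 1)` times `∫ v in 0..1, v ^ n = 1 / (n + 1)` and
`n ∫ v in 0..1, v ^ (2n - 1) = 1 / 2` respectively. -/

theorem integral_pow_pred {n : ℕ} (hn : n ≠ 0) (a b : ℝ) :
    ∫ x in a..b, x ^ (n - 1) = (b ^ n - a ^ n) / n := by
  obtain ⟨k, rfl⟩ := Nat.exists_eq_succ_of_ne_zero hn
  simp [integral_pow]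

theorem uniform_allPay_bid_eq {n : ℕ} (hn : n ≠ 0) (v : ℝ) :
    v * v ^ (n - 1) - ∫ z in (0:ℝ)..v, z ^ (n - 1) = ((n - 1) / n) * v ^ n := by
  rw [integral_pow_pred hn, zero_pow hn, ← pow_succ',
    Nat.sub_add_cancel (Nat.one_le_iff_ne_zero.2 hn)]
  field_simp
  ring

theorem uniform_allPay_revenue {n : ℕ} (hn : n ≠ 0) :
    (n:ℝ) * ∫ v in (0:ℝ)..1, ((n - 1) / n) * v ^ n = (n - 1) / (n + 1) := by
  rw [intervalIntegral.integral_const_mul, integral_pow]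
  field_simp
  simp

theorem uniform_allPay_maxPayment {n : ℕ} (hn : n ≠ 0) :
    (n:ℝ) * ∫ v in (0:ℝ)..1, ((n - 1) / n * v ^ n) * v ^ (n - 1) = (n - 1) / (2 * n) := by
  have hpow (v : ℝ) : v ^ n * v ^ (n - 1) = v ^ (2 * n - 1) := by
    rw [← pow_add]
    congr 1
    omega
  simp_rw [mul_assoc, hpow]
  rw [intervalIntegral.integral_const_mul, integral_pow_pred (by omega), zero_pow (by omega)]
  push_cast
  field_simp
  ring

theorem tendsto_two_mul_natCast_div_add_one :
    Tendsto (fun m : ℕ => 2 * (m:ℝ) / ((m:ℝ) + 1)) atTop (nhds 2) := by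
  simpa [mul_div_assoc] using (tendsto_natCast_div_add_atTop (1:ℝ)).const_mul 2

/-- **Tightness of the utilization-ratio bound for the uniform distribution.**
For uniform `[0,1]` values (`F v = v`, `f v = 1`) and `n ≥ 2` agents, the
highest-bid-wins all-pay auction with no reserve has equilibrium bid function
`b₀ v = v * v^(n-1) - ∫ z in 0..v, z^(n-1) = ((n-1)/n) * v^n`; its expected
revenue is `(n-1)/(n+1)`, its expected maximum payment is `(n-1)/(2n)`, their
ratio is `2n/(n+1)`, which tends to `2` as `n → ∞`. -/
theorem uniform_utilization_tight
    (n : ℕ) (hn : 2 ≤ n) :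
    (∀ v ∈ Set.Icc (0:ℝ) 1,
        v * v ^ (n - 1) - (∫ z in (0:ℝ)..v, z ^ (n - 1)) =
          (((n:ℝ) - 1) / n) * v ^ n) ∧
    ((n:ℝ) * ∫ v in (0:ℝ)..1, (((n:ℝ) - 1) / n) * v ^ n) =
        ((n:ℝ) - 1) / ((n:ℝ) + 1) ∧
    ((n:ℝ) * ∫ v in (0:ℝ)..1, ((((n:ℝ) - 1) / n) * v ^ n) * v ^ (n - 1)) =
        ((n:ℝ) - 1) / (2 * (n:ℝ)) ∧
    (((n:ℝ) - 1) / ((n:ℝ) + 1)) / (((n:ℝ) - 1) / (2 * (n:ℝ))) =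
        2 * (n:ℝ) / ((n:ℝ) + 1) ∧
    Tendsto (fun m : ℕ => 2 * (m:ℝ) / ((m:ℝ) + 1)) atTop (nhds 2) := by
  have hn0 : n ≠ 0 := by omega
  have hn1 : (n:ℝ) - 1 ≠ 0 := sub_ne_zero.2 (by exact_mod_cast (show n ≠ 1 by omega))
  exact ⟨fun v _ => uniform_allPay_bid_eq hn0 v, uniform_allPay_revenue hn0,
    uniform_allPay_maxPayment hn0, div_div_div_cancel_left' _ _ hn1,
    tendsto_two_mul_natCast_div_add_one⟩
end

section
/- For the uniform distribution on [0,1] and n ≥ 2 agents, the virtual value for maximum payment is ψ_n(z) = z^n·(1 + 1/n) − 1/n, which is strictly increasing on [0,1] with unique zero at (n+1)^{−1/n}, and the optimal all-pay auction (highest-bid-wins with reserve value (n+1)^{−1/n}) achieves expected maximum payment n·∫_{(n+1)^{−1/n}}^1 ψ_n(v)·v^{n-1} dv = n/(2(n+1)), which tends to 1/2 as n → ∞. -/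
/-!
With `u = v ^ n` (the cdf `F(v) ^ n` of the highest of the `n` values), the virtual value
`ψ_n v = v ^ n * (1 + 1/n) - 1/n` is affine in `u`, and `n * v ^ (n - 1) dv = du`. Hence the
expected maximum payment is the integral of an affine function of `u` over `[1/(n+1), 1]`,
since the reserve value `r = (n+1)^(-1/n)` satisfies `r ^ n = 1/(n+1)`.
-/

open intervalIntegral Filter Set

section VirtualValue

variable {n : ℕ}

theorem mul_pow_pred_sub_div_eq (hn : n ≠ 0) (z : ℝ) :
    z * z ^ (n - 1) - (1 - z ^ n) / (n : ℝ) = z ^ n * (1 + 1 / (n : ℝ)) - 1 / (n : ℝ) := by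
  rw [mul_pow_sub_one hn]
  ring

theorem strictMonoOn_pow_mul_sub (hn : n ≠ 0) {c : ℝ} (hc : 0 < c) (d : ℝ) :
    StrictMonoOn (fun z : ℝ => z ^ n * c - d) (Ici 0) :=
  (StrictMono.add_const (strictMono_mul_right_of_pos hc) (-d)).comp_strictMonoOn
    (pow_left_strictMonoOn₀ hn) |>.congr fun _ _ => (sub_eq_add_neg _ _).symm

theorem rpow_neg_one_div_natCast_pow (hn : n ≠ 0) {x : ℝ} (hx : 0 ≤ x) :
    (x ^ (-(1 : ℝ) / (n : ℝ))) ^ n = x⁻¹ := by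
  rw [neg_div, one_div, Real.rpow_neg hx, inv_pow, Real.rpow_inv_natCast_pow hx hn]

theorem integral_comp_pow_mul_pow_pred {g : ℝ → ℝ} (hg : Continuous g) (a b : ℝ) :
    ∫ v in a..b, g (v ^ n) * (n * v ^ (n - 1)) = ∫ u in a ^ n..b ^ n, g u :=
  integral_comp_mul_deriv (fun v _ => hasDerivAt_pow n v) (by fun_prop) hg

theorem integral_mul_sub (a b c d : ℝ) :
    ∫ u in a..b, (u * c - d) = (b ^ 2 - a ^ 2) / 2 * c - (b - a) * d := by
  rw [integral_sub ((continuous_mul_const c).intervalIntegrable a b) intervalIntegrable_const,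
    integral_mul_const, integral_id, integral_const, smul_eq_mul]

theorem mul_integral_pow_mul_sub_mul_pow_pred (c d a b : ℝ) :
    (n : ℝ) * ∫ v in a..b, (v ^ n * c - d) * v ^ (n - 1)
      = ((b ^ n) ^ 2 - (a ^ n) ^ 2) / 2 * c - (b ^ n - a ^ n) * d := by
  rw [← integral_mul_sub,
    ← integral_comp_pow_mul_pow_pred (by fun_prop : Continuous fun u => u * c - d),
    ← integral_const_mul]
  congr 1 with v
  ring

end VirtualValue

theorem tendsto_natCast_div_two_mul_add_one :
    Tendsto (fun m : ℕ => (m : ℝ) / (2 * ((m : ℝ) + 1))) atTop (nhds (1 / 2)) := by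
  simpa only [div_div, mul_comm] using (tendsto_natCast_div_add_atTop (1 : ℝ)).div_const 2

/-- **The optimal all-pay auction for uniform values.**  For uniform `[0,1]`
values and `n ≥ 2` agents, the virtual value for maximum payment is
`ψ_n z = z^n * (1 + 1/n) - 1/n`, which is strictly increasing on `[0,1]` with
unique zero at `(n+1)^(-1/n)`; the optimal all-pay auction (highest-bid-wins
with reserve value `(n+1)^(-1/n)`) achieves expected maximum payment
`n * ∫ v in (n+1)^(-1/n)..1, ψ_n v * v^(n-1) = n / (2(n+1))`, which tends to
`1/2` as `n → ∞`. -/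
theorem uniform_optimal_allpay
    (n : ℕ) (hn : 2 ≤ n) (r : ℝ)
    (hrdef : r = ((n : ℝ) + 1) ^ (-(1 : ℝ) / (n : ℝ))) :
    (∀ z ∈ Set.Icc (0:ℝ) 1,
        z * z ^ (n - 1) - (1 - z ^ n) / (n : ℝ) =
          z ^ n * (1 + 1 / (n:ℝ)) - 1 / (n:ℝ)) ∧
    StrictMonoOn (fun z : ℝ => z ^ n * (1 + 1 / (n:ℝ)) - 1 / (n:ℝ))
        (Set.Icc (0:ℝ) 1) ∧
    (r ^ n * (1 + 1 / (n:ℝ)) - 1 / (n:ℝ) = 0 ∧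
      ∀ z ∈ Set.Icc (0:ℝ) 1,
        z ^ n * (1 + 1 / (n:ℝ)) - 1 / (n:ℝ) = 0 → z = r) ∧
    ((n:ℝ) * ∫ v in r..1, (v ^ n * (1 + 1 / (n:ℝ)) - 1 / (n:ℝ)) * v ^ (n - 1))
        = (n:ℝ) / (2 * ((n:ℝ) + 1)) ∧
    Tendsto (fun m : ℕ => (m:ℝ) / (2 * ((m:ℝ) + 1))) atTop (nhds (1/2)) := by
  have hn0 : n ≠ 0 := by omega
  have hr0 : 0 ≤ r := hrdef ▸ by positivity
  have hrn : r ^ n = ((n : ℝ) + 1)⁻¹ :=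
    hrdef ▸ rpow_neg_one_div_natCast_pow hn0 (by positivity)
  have hψr : r ^ n * (1 + 1 / (n : ℝ)) - 1 / (n : ℝ) = 0 := by
    rw [hrn]; field_simp; ring
  have hmono := strictMonoOn_pow_mul_sub hn0 (c := 1 + 1 / (n : ℝ)) (by positivity) (1 / n)
  refine ⟨fun z _ => mul_pow_pred_sub_div_eq hn0 z, hmono.mono Icc_subset_Ici_self,
    ⟨hψr, fun z hz hψz => hmono.injOn hz.1 hr0 (hψz.trans hψr.symm)⟩, ?_,
    tendsto_natCast_div_two_mul_add_one⟩
  rw [mul_integral_pow_mul_sub_mul_pow_pred, hrn, one_pow]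
  field_simp
  ring
end

section
/- For the exponential distribution with cdf F(v) = 1 − e^{−v} and density f(v) = e^{−v} on [0,∞) and n = 2 agents, the virtual value for maximum payment equals ψ_2(z) = (z − 1) + e^{−z}·(1/2 − z), and ψ_2 is not monotone nondecreasing on [0,∞): there exist 0 ≤ z_1 < z_2 with ψ_2(z_1) > ψ_2(z_2). (Thus the exponential distribution, though regular with respect to revenue, is not regular with respect to maximum payment.) -/
open Real

theorem exp_two_agent_max_payment_virtual_value_eq (z : ℝ) :
    z * (1 - exp (-z)) ^ (2 - 1) - (1 - (1 - exp (-z)) ^ 2) / (2 * exp (-z)) =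
      (z - 1) + exp (-z) * (1 / 2 - z) := by
  have hexp : exp (-z) ≠ 0 := (exp_pos _).ne'
  field_simp
  ring

theorem exp_two_agent_max_payment_virtual_value_lt_value_at_zero {z : ℝ} (hz₀ : 0 < z) (hz : z < 1 / 2) :
    (z - 1) + exp (-z) * (1 / 2 - z) < (0 - 1) + exp (-0) * (1 / 2 - 0) := by
  have hexp : exp (-z) < 1 := exp_lt_one_iff.mpr (neg_lt_zero.mpr hz₀)
  have hfactor : 0 < 1 / 2 - z := sub_pos.mpr hz
  rw [neg_zero, exp_zero]
  nlinarith

/-- **The exponential distribution is not regular with respect to maximum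
payment for two agents.**  For the exponential distribution with cdf
`F v = 1 - exp (-v)` and density `f v = exp (-v)` on `[0, ∞)` and `n = 2`
agents, the virtual value for maximum payment
`ψ₂ z = z * F z - (1 - F z ^ 2) / (2 * f z)` equals
`(z - 1) + exp (-z) * (1/2 - z)`, and `ψ₂` is not monotone nondecreasing on
`[0, ∞)`: there exist `0 ≤ z₁ < z₂` with `ψ₂ z₁ > ψ₂ z₂`. -/
theorem exponential_not_regular_for_max_payment :
    (∀ z : ℝ, 0 ≤ z →
      z * (1 - exp (-z)) ^ (2 - 1) -
          (1 - (1 - exp (-z)) ^ 2) / (2 * exp (-z)) =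
        (z - 1) + exp (-z) * (1 / 2 - z)) ∧
    ∃ z₁ z₂ : ℝ, 0 ≤ z₁ ∧ z₁ < z₂ ∧
      (z₁ - 1) + exp (-z₁) * (1 / 2 - z₁) >
        (z₂ - 1) + exp (-z₂) * (1 / 2 - z₂) :=
  ⟨fun z _ => exp_two_agent_max_payment_virtual_value_eq z,
    0, 1 / 4, le_rfl, by norm_num,
    exp_two_agent_max_payment_virtual_value_lt_value_at_zero (by norm_num) (by norm_num)⟩
end

section
/- For all integers n, k with 2 ≤ k ≤ n, one has C(n−1, k−1) · ∫_0^1 (1−v)^{k−1} · v^{2n−k−1} dv < 1/(2n−1); equivalently, C(n−1, k−1) · (k−1)! · (2n−k−1)! · (2n−1) < (2n−1)!. (This is the strict positivity of H_n(0) in the proof that winner-take-all is the optimal static contest.) -/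
open MeasureTheory intervalIntegral
open scoped Nat

/-!
The Beta integral is `(k-1)! (2n-k-1)! / (2n-1)!`, so both claims amount to
`C(n-1, k-1) (k-1)! (2n-k-1)! < (2n-2)! = C(2n-2, k-1) (k-1)! (2n-k-1)!`, i.e. to
`C(n-1, k-1) < C(2n-2, k-1)`, which is strict since `k - 1 ≥ 1` and `n - 1 < 2n - 2`.
-/

theorem integral_one_sub_pow_mul_pow (a b : ℕ) :
    ∫ v in (0:ℝ)..1, (1 - v) ^ a * v ^ b = (a ! * b ! : ℝ) / (a + b + 1)! := by
  have hbeta : ((∫ v in (0:ℝ)..1, (1 - v) ^ a * v ^ b : ℝ) : ℂ) =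
      Complex.betaIntegral (b + 1) (a + 1) := by
    rw [Complex.betaIntegral, ← intervalIntegral.integral_ofReal]
    refine intervalIntegral.integral_congr fun v _ ↦ ?_
    simp only [add_sub_cancel_right, Complex.cpow_natCast]
    push_cast
    ring
  rw [Complex.betaIntegral_eq_Gamma_mul_div _ _ (by simp only [Complex.add_re, Complex.natCast_re, Complex.one_re]; positivity)
      (by simp only [Complex.add_re, Complex.natCast_re, Complex.one_re]; positivity),
    show (b + 1 : ℂ) + (a + 1) = ((a + b + 1 : ℕ) : ℂ) + 1 by push_cast; ring,
    Complex.Gamma_nat_eq_factorial, Complex.Gamma_nat_eq_factorial,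
    Complex.Gamma_nat_eq_factorial] at hbeta
  apply Complex.ofReal_injective
  rw [hbeta]
  push_cast
  ring

theorem Nat.choose_lt_choose_of_lt {m M j : ℕ} (hj : j ≠ 0) (hjm : j ≤ m + 1) (hmM : m < M) :
    m.choose j < M.choose j := by
  obtain ⟨i, rfl⟩ := Nat.exists_eq_succ_of_ne_zero hj
  calc m.choose (i + 1) < m.choose i + m.choose (i + 1) := by
        have := Nat.choose_pos (show i ≤ m by omega); omega
    _ = (m + 1).choose (i + 1) := (Nat.choose_succ_succ m i).symm
    _ ≤ M.choose (i + 1) := Nat.choose_le_choose _ hmM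

theorem choose_mul_factorial_mul_factorial_mul_lt {n k : ℕ} (hk : 2 ≤ k) (hkn : k ≤ n) :
    (n - 1).choose (k - 1) * (k - 1)! * (2 * n - k - 1)! * (2 * n - 1) < (2 * n - 1)! := by
  have hchoose : (n - 1).choose (k - 1) < (2 * n - 2).choose (k - 1) :=
    Nat.choose_lt_choose_of_lt (by omega) (by omega) (by omega)
  have hfactorial : (2 * n - 2).choose (k - 1) * (k - 1)! * (2 * n - k - 1)! = (2 * n - 2)! := by
    have := Nat.choose_mul_factorial_mul_factorial (show k - 1 ≤ 2 * n - 2 by omega)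
    rwa [show 2 * n - 2 - (k - 1) = 2 * n - k - 1 by omega] at this
  have hpos : 0 < (k - 1)! * (2 * n - k - 1)! * (2 * n - 1) :=
    Nat.mul_pos (by positivity) (by omega)
  calc (n - 1).choose (k - 1) * (k - 1)! * (2 * n - k - 1)! * (2 * n - 1)
      = (n - 1).choose (k - 1) * ((k - 1)! * (2 * n - k - 1)! * (2 * n - 1)) := by ring
    _ < (2 * n - 2).choose (k - 1) * ((k - 1)! * (2 * n - k - 1)! * (2 * n - 1)) :=
      Nat.mul_lt_mul_of_pos_right hchoose hpos
    _ = (2 * n - 1) * (2 * n - 1 - 1)! := by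
      rw [show 2 * n - 1 - 1 = 2 * n - 2 by omega, ← hfactorial]; ring
    _ = (2 * n - 1)! := Nat.mul_factorial_pred (by omega)

/-- **Strict positivity of `H_n(0)`** in the proof that winner-take-all is the
optimal static contest: for all integers `n, k` with `2 ≤ k ≤ n`,
`C(n-1, k-1) * ∫ v in 0..1, (1-v)^(k-1) * v^(2n-k-1) < 1/(2n-1)`;
equivalently, `C(n-1, k-1) * (k-1)! * (2n-k-1)! * (2n-1) < (2n-1)!`. -/
theorem choose_beta_integral_lt
    (n k : ℕ) (hk : 2 ≤ k) (hkn : k ≤ n) :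
    ((n - 1).choose (k - 1) : ℝ) *
        (∫ v in (0:ℝ)..1, (1 - v) ^ (k - 1) * v ^ (2 * n - k - 1)) <
      1 / (2 * (n:ℝ) - 1) ∧
    (n - 1).choose (k - 1) * Nat.factorial (k - 1) * Nat.factorial (2 * n - k - 1) * (2 * n - 1) <
      Nat.factorial (2 * n - 1) := by
  have hnat := choose_mul_factorial_mul_factorial_mul_lt hk hkn
  refine ⟨?_, hnat⟩
  have hdenom : (2 * (n:ℝ) - 1) = ((2 * n - 1 : ℕ) : ℝ) := by
    rw [Nat.cast_sub (by omega)]; push_cast; ring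
  rw [integral_one_sub_pow_mul_pow, show k - 1 + (2 * n - k - 1) + 1 = 2 * n - 1 by omega,
    hdenom, ← mul_div_assoc, div_lt_div_iff₀ (by positivity) (by norm_cast; omega), one_mul, ← mul_assoc]
  exact_mod_cast hnat
end

section
/- For all integers n, k with 2 ≤ k ≤ n and every x ∈ (0,1], the quantity H_{n,k}(x) = ∫_x^1 u^{n−k−1} · [ C(n−1, k−1)·(n−k+1)·( ∫_u^1 (1−v)^{k−2}·v^{n−1} dv )·( u − (n−k)/(n−k+1) ) + n·( ∫_u^1 v^{n−2} dv )·u^k ] du is nonnegative. (This is the key inequality in the proof that the winner-take-all division of the reward is the optimal static all-pay contest.) -/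
open MeasureTheory intervalIntegral

/-!
Write `a = n - k`. The first summand of the integrand is
`C(n-1,k-1) · (u^(a+1) - u^a)' · ∫_u^1 (1-v)^(k-2) v^(n-1) dv`; integrating it by parts
leaves the boundary term `C(n-1,k-1) · x^a (1-x) · ∫_x^1 (1-v)^(k-2) v^(n-1) dv ≥ 0` plus an
integral whose integrand combines with the second summand into
`u^(n-1) · (n/(n-1) · (1 - u^(n-1)) - C(n-1,k-1) (1-u)^(k-1) u^(n-k))`.
This is nonnegative since `C(n-1,k-1) (1-u)^(k-1) u^(n-k)` and `u^(n-1)` are two distinct terms of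
the binomial expansion of `((1-u) + u)^(n-1) = 1`.
-/

theorem choose_mul_one_sub_pow_mul_pow_le {m j : ℕ} (hj : j ≠ 0) (hjm : j ≤ m) {u : ℝ}
    (hu0 : 0 ≤ u) (hu1 : u ≤ 1) :
    (m.choose j : ℝ) * (1 - u) ^ j * u ^ (m - j) ≤ 1 - u ^ m := by
  have hsum := add_pow (1 - u) u m
  rw [sub_add_cancel, one_pow] at hsum
  have hterms := Finset.add_le_sum (f := fun i => (1 - u) ^ i * u ^ (m - i) * (m.choose i : ℝ))
    (fun i _ => by have : 0 ≤ 1 - u := sub_nonneg.2 hu1; positivity)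
    (Finset.mem_range.2 (Nat.succ_pos m)) (Finset.mem_range.2 (Nat.lt_succ_of_le hjm))
    (Ne.symm hj)
  simp only [pow_zero, Nat.sub_zero, Nat.choose_zero_right, Nat.cast_one, one_mul, mul_one,
    ← hsum] at hterms
  linarith

theorem integral_add_nonneg_of_hasDerivAt {g g' φ : ℝ → ℝ} {a b : ℝ} (hab : a ≤ b)
    (hg : ∀ u ∈ Set.uIcc a b, HasDerivAt g (g' u) u) (hg' : IntervalIntegrable g' volume a b)
    (hφ : IntervalIntegrable φ volume a b) (hgab : g a ≤ g b)
    (hφ0 : ∀ u ∈ Set.Icc a b, 0 ≤ φ u) :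
    0 ≤ ∫ u in a..b, (g' u + φ u) := by
  rw [integral_add hg' hφ, integral_eq_sub_of_hasDerivAt hg hg']
  have : 0 ≤ ∫ u in a..b, φ u := integral_nonneg hab hφ0
  linarith

namespace WinnerTakeAll

variable (n k : ℕ)

noncomputable def tail (u : ℝ) : ℝ := ∫ v in u..1, (1 - v) ^ (k - 2) * v ^ (n - 1)

noncomputable def boundary (u : ℝ) : ℝ := (u ^ (n - k + 1) - u ^ (n - k)) * tail n k u

noncomputable def boundaryDeriv (u : ℝ) : ℝ :=
  (((n - k + 1 : ℕ) : ℝ) * u ^ (n - k) - ((n - k : ℕ) : ℝ) * u ^ (n - k - 1)) * tail n k u +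
    (u ^ (n - k + 1) - u ^ (n - k)) * -((1 - u) ^ (k - 2) * u ^ (n - 1))

noncomputable def slack (u : ℝ) : ℝ :=
  u ^ (n - 1) * ((n : ℝ) / (n - 1 : ℕ) * (1 - u ^ (n - 1)) -
    ((n - 1).choose (k - 1) : ℝ) * (1 - u) ^ (k - 1) * u ^ (n - k))

theorem hasDerivAt_tail (u : ℝ) :
    HasDerivAt (tail n k) (-((1 - u) ^ (k - 2) * u ^ (n - 1))) u := by
  have hc : Continuous fun v : ℝ => (1 - v) ^ (k - 2) * v ^ (n - 1) := by fun_prop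
  exact integral_hasDerivAt_left (hc.intervalIntegrable _ _) (hc.stronglyMeasurableAtFilter _ _)
    hc.continuousAt

theorem hasDerivAt_boundary (u : ℝ) : HasDerivAt (boundary n k) (boundaryDeriv n k u) u := by
  have h := ((hasDerivAt_pow (n - k + 1) u).sub (hasDerivAt_pow (n - k) u)).mul
    (hasDerivAt_tail n k u)
  rwa [Nat.add_sub_cancel] at h

theorem continuous_boundaryDeriv : Continuous (boundaryDeriv n k) := by
  have : Continuous (tail n k) := continuous_iff_continuousAt.2 fun u =>
    (hasDerivAt_tail n k u).continuousAt
  unfold boundaryDeriv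
  fun_prop

theorem continuous_slack : Continuous (slack n k) := by
  unfold slack
  fun_prop

theorem boundary_one : boundary n k 1 = 0 := by simp [boundary]

theorem boundary_nonpos {u : ℝ} (hu0 : 0 ≤ u) (hu1 : u ≤ 1) : boundary n k u ≤ 0 := by
  have htail : 0 ≤ tail n k u := integral_nonneg hu1 fun v hv => by
    have : 0 ≤ 1 - v := sub_nonneg.2 hv.2
    have : 0 ≤ v := hu0.trans hv.1
    positivity
  have hpow : u ^ (n - k + 1) ≤ u ^ (n - k) := pow_le_pow_of_le_one hu0 hu1 (Nat.le_succ _)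
  exact mul_nonpos_of_nonpos_of_nonneg (sub_nonpos.2 hpow) htail

theorem slack_nonneg (hk : 2 ≤ k) (hkn : k ≤ n) {u : ℝ} (hu0 : 0 ≤ u) (hu1 : u ≤ 1) :
    0 ≤ slack n k u := by
  have hbinom := choose_mul_one_sub_pow_mul_pow_le (m := n - 1) (j := k - 1) (by omega)
    (by omega) hu0 hu1
  rw [show n - 1 - (k - 1) = n - k by omega] at hbinom
  have hratio : 1 ≤ (n : ℝ) / (n - 1 : ℕ) := by
    rw [one_le_div (by exact_mod_cast (by omega : 0 < n - 1))]
    exact_mod_cast Nat.sub_le n 1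
  have hrest : 0 ≤ 1 - u ^ (n - 1) := sub_nonneg.2 (pow_le_one₀ hu0 hu1)
  exact mul_nonneg (pow_nonneg hu0 _) (by nlinarith)

theorem integrand_eq (hk : 2 ≤ k) (hkn : k ≤ n) {u : ℝ} (hu : 0 < u) :
    u ^ ((n:ℤ) - (k:ℤ) - 1) *
        (((n - 1).choose (k - 1) : ℝ) * ((n:ℝ) - (k:ℝ) + 1) *
            (∫ v in u..1, (1 - v) ^ (k - 2) * v ^ (n - 1)) *
            (u - ((n:ℝ) - (k:ℝ)) / ((n:ℝ) - (k:ℝ) + 1)) +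
          (n:ℝ) * (∫ v in u..1, v ^ (n - 2)) * u ^ k) =
      ((n - 1).choose (k - 1) : ℝ) * boundaryDeriv n k u + slack n k u := by
  obtain ⟨p, rfl⟩ : ∃ p, k = p + 2 := ⟨k - 2, by omega⟩
  obtain ⟨a, rfl⟩ : ∃ a, n = p + 2 + a := ⟨n - (p + 2), by omega⟩
  have hexp : ((p + 2 + a : ℕ) : ℤ) - ((p + 2 : ℕ) : ℤ) - 1 = (a : ℤ) - 1 := by
    push_cast; ring
  have hdiff : ((p + 2 + a : ℕ) : ℝ) - ((p + 2 : ℕ) : ℝ) = a := by push_cast; ring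
  simp only [boundaryDeriv, slack, tail, integral_pow, hexp, hdiff, zpow_sub_one₀ hu.ne',
    zpow_natCast, show p + 2 + a - (p + 2) = a by omega, show p + 2 + a - 1 = p + a + 1 by omega,
    show p + 2 + a - 2 = p + a by omega, show p + 2 - 1 = p + 1 by omega]
  push_cast
  -- `a - 1` truncates at `a = 0`; there the integrand's `u⁻¹` is cancelled by the factor `u - 0`.
  rcases a with _ | a
  · field_simp
    ring
  · simp only [Nat.add_sub_cancel]
    field_simp
    ring

end WinnerTakeAll

/-- **The key inequality in the proof that winner-take-all is the optimal
static all-pay contest**: for all integers `n, k` with `2 ≤ k ≤ n` and every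
`x ∈ (0, 1]`, the quantity
`H_{n,k}(x) = ∫ u in x..1, u^(n-k-1) * (C(n-1,k-1) * (n-k+1) *
  (∫ v in u..1, (1-v)^(k-2) * v^(n-1)) * (u - (n-k)/(n-k+1))
  + n * (∫ v in u..1, v^(n-2)) * u^k)` is nonnegative. -/
theorem H_nonneg
    (n k : ℕ) (hk : 2 ≤ k) (hkn : k ≤ n)
    (x : ℝ) (hx : x ∈ Set.Ioc (0:ℝ) 1) :
    0 ≤ ∫ u in x..1, u ^ ((n:ℤ) - (k:ℤ) - 1) *
        (((n - 1).choose (k - 1) : ℝ) * ((n:ℝ) - (k:ℝ) + 1) *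
            (∫ v in u..1, (1 - v) ^ (k - 2) * v ^ (n - 1)) *
            (u - ((n:ℝ) - (k:ℝ)) / ((n:ℝ) - (k:ℝ) + 1)) +
          (n:ℝ) * (∫ v in u..1, v ^ (n - 2)) * u ^ k) := by
  open WinnerTakeAll in
  obtain ⟨hx0, hx1⟩ := hx
  rw [integral_congr fun u hu =>
    integrand_eq n k hk hkn (hx0.trans_le (Set.uIcc_of_le hx1 ▸ hu).1)]
  refine integral_add_nonneg_of_hasDerivAt hx1
    (fun u _ => (hasDerivAt_boundary n k u).const_mul _)
    (((continuous_boundaryDeriv n k).const_mul _).intervalIntegrable _ _)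
    ((continuous_slack n k).intervalIntegrable _ _) ?_
    fun u hu => slack_nonneg n k hk hkn (hx0.le.trans hu.1) hu.2
  rw [boundary_one]
  exact mul_le_mul_of_nonneg_left (boundary_nonpos n k hx0.le hx1) (Nat.cast_nonneg _)
end
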